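/- arXiv:1402.6655 — 8 statements merged into one kernel-verified Lean document; each statement's English description precedes it below -/
import Mathlib

section
/- For every x in R^n and every γ > 0, F(P_γ(x)) ≤ F_γ(x) - (γ/2)(1 - γL_f)‖G_γ(x)‖². In particular, if γ ∈ (0, 1/L_f] then F(P_γ(x)) ≤ F_γ(x). -/
open scoped RealInnerProductSpace
open Filter Topology

noncomputable section

abbrev Eucl (n : ℕ) := EuclideanSpace ℝ (Fin n)

/-- `p` is the proximal mapping of `g` with parameter `γ`:
`p x` minimizes `u ↦ g u + ‖u - x‖² / (2γ)`. -/
def IsProx {n : ℕ} (γ : ℝ) (g : Eucl n → EReal) (p : Eucl n → Eucl n) : Prop :=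
  ∀ x u, g (p x) + ((‖p x - x‖ ^ 2 / (2 * γ) : ℝ) : EReal)
        ≤ g u + ((‖u - x‖ ^ 2 / (2 * γ) : ℝ) : EReal)

/-- `g` is proper, lower semicontinuous and convex (with values in `ℝ ∪ {+∞}`). -/
def ProperLscConvex {n : ℕ} (g : Eucl n → EReal) : Prop :=
  (∃ x, g x ≠ ⊤) ∧ (∀ x, g x ≠ ⊥) ∧ LowerSemicontinuous g ∧
  (∀ x y : Eucl n, ∀ a b : ℝ, 0 ≤ a → 0 ≤ b → a + b = 1 →
    g (a • x + b • y) ≤ (a : EReal) * g x + (b : EReal) * g y)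

/-!
Along the segment from `x` to `y`, the function
`t ↦ f (x + t • (y - x)) - t ⟪f' x, y - x⟫ - (L/2) t² ‖y - x‖²` has derivative
`⟪f' (x + t • (y - x)) - f' x, y - x⟫ - L t ‖y - x‖² ≤ 0`, by Cauchy–Schwarz and the Lipschitz
bound on `f'`; comparing its values at `0` and `1` gives the descent lemma
`f y ≤ f x + ⟪f' x, y - x⟫ + (L/2) ‖y - x‖²`. At `y = P_γ(x)`, the right-hand side is exactly
`F_γ(x) - g(P_γ(x)) - (γ/2)(1 - γL) ‖G_γ(x)‖²`, and adding `g(P_γ(x))` gives the theorem.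
-/

section Descent

variable {E : Type*} [NormedAddCommGroup E] [InnerProductSpace ℝ E]

theorem HasGradientAt.hasDerivAt_comp_add_smul [CompleteSpace E] {f : E → ℝ} {f' x v : E}
    {t : ℝ} (hf : HasGradientAt f f' (x + t • v)) :
    HasDerivAt (fun s : ℝ => f (x + s • v)) ⟪f', v⟫ t := by
  have hline : HasDerivAt (fun s : ℝ => x + s • v) v t := by
    simpa using ((hasDerivAt_id t).smul_const v).const_add x
  simpa [Function.comp_def] using hf.hasFDerivAt.comp_hasDerivAt t hline

theorem LipschitzWith.inner_sub_le {f' : E → E} {L : NNReal} (hL : LipschitzWith L f')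
    (x v : E) {t : ℝ} (ht : 0 ≤ t) :
    ⟪f' (x + t • v) - f' x, v⟫ ≤ L * t * ‖v‖ ^ 2 :=
  calc ⟪f' (x + t • v) - f' x, v⟫ ≤ ‖f' (x + t • v) - f' x‖ * ‖v‖ := real_inner_le_norm _ _
    _ ≤ L * ‖(x + t • v) - x‖ * ‖v‖ := by gcongr; exact hL.norm_sub_le _ _
    _ = L * t * ‖v‖ ^ 2 := by
      rw [add_sub_cancel_left, norm_smul, Real.norm_of_nonneg ht]; ring

theorem le_add_inner_add_of_lipschitzWith_gradient [CompleteSpace E] {f : E → ℝ} {f' : E → E}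
    {L : NNReal} (hf : ∀ x, HasGradientAt f (f' x) x) (hL : LipschitzWith L f') (x y : E) :
    f y ≤ f x + ⟪f' x, y - x⟫ + L / 2 * ‖y - x‖ ^ 2 := by
  set v := y - x
  let h : ℝ → ℝ := fun t => f (x + t • v) - t * ⟪f' x, v⟫ - L / 2 * t ^ 2 * ‖v‖ ^ 2
  have hderiv : ∀ t, HasDerivAt h (⟪f' (x + t • v), v⟫ - ⟪f' x, v⟫ - L * t * ‖v‖ ^ 2) t := by
    intro t
    have hsq := ((hasDerivAt_pow 2 t).const_mul (L / 2 : ℝ)).mul_const (‖v‖ ^ 2)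
    refine (((hf _).hasDerivAt_comp_add_smul.sub ((hasDerivAt_id t).mul_const ⟪f' x, v⟫)).sub
      hsq).congr_deriv ?_
    simp only [one_mul, Nat.cast_ofNat]
    ring
  have hanti : AntitoneOn h (Set.Icc 0 1) := by
    refine antitoneOn_of_hasDerivWithinAt_nonpos (convex_Icc 0 1)
      (fun t _ => (hderiv t).continuousAt.continuousWithinAt)
      (fun t _ => (hderiv t).hasDerivWithinAt) fun t ht => ?_
    rw [interior_Icc] at ht
    have := hL.inner_sub_le x v ht.1.le
    rw [inner_sub_left] at this
    linarith
  have h0 : h 0 = f x := by simp [h]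
  have h1 : h 1 = f y - ⟪f' x, v⟫ - L / 2 * ‖v‖ ^ 2 := by simp [h, v]
  linarith [hanti (by simp) (by simp) zero_le_one]

end Descent

theorem EReal.coe_add_le_coe_add_sub {a b c : ℝ} (h : a ≤ b - c) (z : EReal) :
    (a : EReal) + z ≤ (b : EReal) + z - c := by
  rw [sub_eq_add_neg, add_right_comm, ← sub_eq_add_neg, ← EReal.coe_sub]
  exact add_le_add_left (EReal.coe_le_coe_iff.2 h) z

theorem fbe_lower_bound_general {n : ℕ} (f : Eucl n → ℝ) (f' : Eucl n → Eucl n)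
    (g : Eucl n → EReal) (γ : ℝ) (p : Eucl n → Eucl n) (Lf : NNReal)
    (hf' : ∀ x, HasGradientAt f (f' x) x)
    (hLip : LipschitzWith Lf f')
    (hγ : 0 < γ)
    (x : Eucl n) :
    (((f (p (x - γ • f' x)) : ℝ) : EReal) + g (p (x - γ • f' x))
      ≤ ((f x + ⟪f' x, p (x - γ • f' x) - x⟫
            + ‖p (x - γ • f' x) - x‖ ^ 2 / (2 * γ) : ℝ) : EReal) + g (p (x - γ • f' x))
        - ((γ / 2 * (1 - γ * Lf) * ‖γ⁻¹ • (x - p (x - γ • f' x))‖ ^ 2 : ℝ) : EReal)) ∧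
    (γ ≤ 1 / Lf →
      ((f (p (x - γ • f' x)) : ℝ) : EReal) + g (p (x - γ • f' x))
        ≤ ((f x + ⟪f' x, p (x - γ • f' x) - x⟫
            + ‖p (x - γ • f' x) - x‖ ^ 2 / (2 * γ) : ℝ) : EReal) + g (p (x - γ • f' x))) := by
  set y := p (x - γ • f' x)
  have hgap : ‖y - x‖ ^ 2 / (2 * γ) - γ / 2 * (1 - γ * Lf) * ‖γ⁻¹ • (x - y)‖ ^ 2
      = Lf / 2 * ‖y - x‖ ^ 2 := by
    rw [norm_smul, norm_sub_rev, Real.norm_of_nonneg (inv_nonneg.2 hγ.le)]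
    field_simp
    ring
  have hdescent := le_add_inner_add_of_lipschitzWith_gradient hf' hLip x y
  refine ⟨EReal.coe_add_le_coe_add_sub (by linarith) _, fun hγL => ?_⟩
  have hγLf : γ * Lf ≤ 1 := by
    rcases eq_or_lt_of_le Lf.coe_nonneg with hL0 | hLpos
    · rw [← hL0, mul_zero]; exact zero_le_one
    · exact (le_div_iff₀ hLpos).1 hγL
  have hresidual : 0 ≤ γ / 2 * (1 - γ * Lf) * ‖γ⁻¹ • (x - y)‖ ^ 2 := by
    have : 0 ≤ 1 - γ * Lf := by linarith
    positivity
  exact add_le_add_left (EReal.coe_le_coe_iff.2 (by linarith)) _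

/-- For every `x` and `γ > 0`, `F(P_γ(x)) ≤ F_γ(x) - (γ/2)(1 - γ L_f)‖G_γ(x)‖²`;
in particular if `γ ∈ (0, 1/L_f]` then `F(P_γ(x)) ≤ F_γ(x)`. -/
theorem fbe_lower_bound {n : ℕ} (f : Eucl n → ℝ) (f' : Eucl n → Eucl n)
    (g : Eucl n → EReal) (γ : ℝ) (p : Eucl n → Eucl n) (Lf : NNReal)
    (hf : ConvexOn ℝ Set.univ f)
    (hf' : ∀ x, HasGradientAt f (f' x) x)
    (hLip : LipschitzWith Lf f')
    (hg : ProperLscConvex g)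
    (hγ : 0 < γ)
    (hp : IsProx γ g p) (x : Eucl n) :
    (((f (p (x - γ • f' x)) : ℝ) : EReal) + g (p (x - γ • f' x))
      ≤ ((f x + ⟪f' x, p (x - γ • f' x) - x⟫
            + ‖p (x - γ • f' x) - x‖ ^ 2 / (2 * γ) : ℝ) : EReal) + g (p (x - γ • f' x))
        - ((γ / 2 * (1 - γ * Lf) * ‖γ⁻¹ • (x - p (x - γ • f' x))‖ ^ 2 : ℝ) : EReal)) ∧
    (γ ≤ 1 / Lf →
      ((f (p (x - γ • f' x)) : ℝ) : EReal) + g (p (x - γ • f' x))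
        ≤ ((f x + ⟪f' x, p (x - γ • f' x) - x⟫
            + ‖p (x - γ • f' x) - x‖ ^ 2 / (2 * γ) : ℝ) : EReal) + g (p (x - γ • f' x))) :=
  fbe_lower_bound_general f f' g γ p Lf hf' hLip hγ x
end
end

section
/- If γ ∈ (0, 1/L_f), then x minimizes F = f + g if and only if x minimizes the forward-backward envelope F_γ; moreover inf F = inf F_γ. -/
open scoped RealInnerProductSpace
open Filter Topology

noncomputable section

/-! By the descent lemma, the model `u ↦ f x + ⟪∇f x, u - x⟫ + ‖u - x‖²/(2γ) + g u` whose
infimum is `F_γ x` dominates `F u + c‖u - x‖²` with `c = 1/(2γ) - L_f/2 > 0`, and equals `F x`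
at `u = x`. Hence `inf F ≤ F_γ ≤ F`, which gives `inf F = inf F_γ` and shows that minimizers of `F`
minimize `F_γ`. Conversely, if `x` minimizes `F_γ`, then `F u ≥ F_γ x` for every `u`, so the
quadratic term forces approximate minimizers `u` of the model at `x` to converge to `x`, and lower
semicontinuity of `F` gives `F x ≤ F_γ x`. That `F_γ x` is finite follows from an affine minorant
of `g`, obtained by separating a point from its closed convex epigraph. -/

section QuadraticModel

variable {X : Type*} [PseudoMetricSpace X]

theorem le_iInf_of_quadratic_model {F M : X → EReal} {x : X} {c : ℝ}
    (hF : LowerSemicontinuousAt F x) (hc : 0 < c)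
    (hM : ∀ u, ((c * dist u x ^ 2 : ℝ) : EReal) + F u ≤ M u)
    (hmin : ∀ u, ⨅ v, M v ≤ F u) (hbot : ⨅ v, M v ≠ ⊥) : F x ≤ ⨅ u, M u := by
  refine le_of_forall_gt_imp_ge_of_dense fun q hq => hF.frequently q ?_
  obtain ⟨q', hrq', hq'q⟩ := EReal.lt_iff_exists_real_btwn.1 hq
  set r := ⨅ v, M v
  lift r to ℝ using ⟨(hrq'.trans (EReal.coe_lt_top q')).ne, hbot⟩ with r₀ hr₀
  rw [EReal.coe_lt_coe_iff] at hrq'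
  rw [Metric.nhds_basis_ball.frequently_iff]
  intro δ hδ
  -- `ε ≤ c δ²` puts an `ε`-minimizer of `M` in the `δ`-ball; `ε ≤ q' - r₀` keeps `F` below `q'`
  set ε := min (q' - r₀) (c * δ ^ 2)
  have hε : 0 < ε := lt_min (by linarith) (by positivity)
  obtain ⟨u, hu⟩ := iInf_lt_iff.1 (hr₀ ▸ (EReal.coe_lt_coe_iff.2 (lt_add_of_pos_right r₀ hε)))
  have hdist : c * dist u x ^ 2 < ε := by
    have : ((c * dist u x ^ 2 + r₀ : ℝ) : EReal) < (r₀ + ε : ℝ) := by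
      rw [EReal.coe_add]
      exact (add_le_add_right (hmin u) _).trans_lt ((hM u).trans_lt hu)
    rw [EReal.coe_lt_coe_iff] at this
    linarith
  refine ⟨u, ?_, le_of_lt ?_⟩
  · rw [Metric.mem_ball]
    have : dist u x ^ 2 < δ ^ 2 := lt_of_mul_lt_mul_left (hdist.trans_le (min_le_right _ _)) hc.le
    exact lt_of_pow_lt_pow_left₀ 2 hδ.le this
  · calc F u ≤ ((c * dist u x ^ 2 : ℝ) : EReal) + F u :=
          le_add_of_nonneg_left (EReal.coe_nonneg.2 (by positivity))
      _ < (r₀ + ε : ℝ) := (hM u).trans_lt hu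
      _ ≤ q' := EReal.coe_le_coe_iff.2 (by linarith [min_le_left (q' - r₀) (c * δ ^ 2)])
      _ < q := hq'q

theorem isMin_iff_and_iInf_eq_of_quadratic_model {F : X → EReal} {M : X → X → EReal} {c : ℝ}
    (hF : LowerSemicontinuous F) (hc : 0 < c) (hself : ∀ x, M x x ≤ F x)
    (hM : ∀ x u, ((c * dist u x ^ 2 : ℝ) : EReal) + F u ≤ M x u)
    (hbot : ∀ x, ⨅ u, M x u ≠ ⊥) :
    (∀ x, (∀ y, F x ≤ F y) ↔ ∀ y, ⨅ u, M x u ≤ ⨅ u, M y u) ∧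
      ⨅ x, F x = ⨅ x, ⨅ u, M x u := by
  have hle (x : X) : ⨅ u, M x u ≤ F x := (iInf_le _ x).trans (hself x)
  have hge (x u : X) : F u ≤ M x u :=
    (le_add_of_nonneg_left (EReal.coe_nonneg.2 (by positivity))).trans (hM x u)
  refine ⟨fun x => ⟨fun hx y => (hle x).trans (le_iInf fun u => (hx u).trans (hge y u)),
    fun hx y => ?_⟩, le_antisymm (le_iInf₂ fun x u => (iInf_le _ u).trans (hge x u))
      (iInf_mono hle)⟩
  calc F x ≤ ⨅ u, M x u :=
        le_iInf_of_quadratic_model (hF x) hc (hM x) (fun u => (hx u).trans (hle u)) (hbot x)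
    _ ≤ ⨅ u, M y u := hx y
    _ ≤ F y := hle y

end QuadraticModel

theorem LowerSemicontinuous.isClosed_realEpigraph {α : Type*} [TopologicalSpace α] {g : α → EReal}
    (hg : LowerSemicontinuous g) : IsClosed {p : α × ℝ | g p.1 ≤ p.2} :=
  hg.isClosed_epigraph.preimage
    (continuous_fst.prodMk (continuous_coe_real_ereal.comp continuous_snd))

theorem convex_realEpigraph {E : Type*} [AddCommGroup E] [Module ℝ E] {g : E → EReal}
    (hconv : ∀ x y : E, ∀ a b : ℝ, 0 ≤ a → 0 ≤ b → a + b = 1 →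
      g (a • x + b • y) ≤ (a : EReal) * g x + (b : EReal) * g y) :
    Convex ℝ {p : E × ℝ | g p.1 ≤ p.2} := by
  intro p hp q hq a b ha hb hab
  calc g (a • p.1 + b • q.1) ≤ (a : EReal) * g p.1 + (b : EReal) * g q.1 := hconv _ _ a b ha hb hab
    _ ≤ (a : EReal) * p.2 + (b : EReal) * q.2 :=
        add_le_add (mul_le_mul_of_nonneg_left hp (EReal.coe_nonneg.2 ha))
          (mul_le_mul_of_nonneg_left hq (EReal.coe_nonneg.2 hb))
    _ = ((a • p + b • q).2 : ℝ) := by simp [EReal.coe_mul, EReal.coe_add]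

theorem exists_continuousLinearMap_add_le {E : Type*} [AddCommGroup E] [Module ℝ E]
    [TopologicalSpace E] [IsTopologicalAddGroup E] [ContinuousSMul ℝ E] [LocallyConvexSpace ℝ E]
    {g : E → EReal} (hne : ∃ x, g x ≠ ⊤) (hbot : ∀ x, g x ≠ ⊥)
    (hlsc : LowerSemicontinuous g)
    (hconv : ∀ x y : E, ∀ a b : ℝ, 0 ≤ a → 0 ≤ b → a + b = 1 →
      g (a • x + b • y) ≤ (a : EReal) * g x + (b : EReal) * g y) :
    ∃ (φ : E →L[ℝ] ℝ) (b : ℝ), ∀ u, ((φ u + b : ℝ) : EReal) ≤ g u := by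
  obtain ⟨x₀, hx₀⟩ := hne
  lift g x₀ to ℝ using ⟨hx₀, hbot x₀⟩ with s₀ hs₀
  have hout : (x₀, s₀ - 1) ∉ {p : E × ℝ | g p.1 ≤ p.2} := by
    simp only [Set.mem_ofPred_eq, ← hs₀, not_le]
    exact_mod_cast sub_one_lt s₀
  obtain ⟨Φ, t, hΦx₀, hΦ⟩ :=
    geometric_hahn_banach_point_closed (convex_realEpigraph hconv) hlsc.isClosed_realEpigraph hout
  have hsplit (z : E) (s : ℝ) : Φ (z, s) = Φ (z, 0) + s * Φ (0, 1) := by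
    have : (z, s) = (z, 0) + s • ((0 : E), (1 : ℝ)) := by simp
    rw [this, map_add, map_smul, smul_eq_mul]
  -- `Φ` increases strictly along the vertical, so `Φ > t` on the epigraph says `g` lies above an
  -- affine function
  have hvert : 0 < Φ (0, 1) := by
    have := hΦ (x₀, s₀) (by simp [← hs₀])
    rw [hsplit] at this hΦx₀
    linarith
  refine ⟨-(Φ (0, 1))⁻¹ • Φ.comp (.inl ℝ E ℝ), t / Φ (0, 1), fun u => ?_⟩
  induction hgu : g u using EReal.rec with
  | bot => exact absurd hgu (hbot u)
  | top => exact le_top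
  | coe s =>
    have := hΦ (u, s) (by simp [hgu])
    rw [hsplit] at this
    rw [EReal.coe_le_coe_iff]
    simp only [FunLike.coe_smul, Pi.smul_apply, ContinuousLinearMap.comp_apply,
      ContinuousLinearMap.inl_apply, smul_eq_mul]
    field_simp
    linarith

theorem ContinuousLinearMap.neg_le_apply_add_norm_sq {F : Type*} [SeminormedAddCommGroup F]
    [NormedSpace ℝ F] (φ : F →L[ℝ] ℝ) {γ : ℝ} (hγ : 0 < γ) (v : F) :
    -(γ * ‖φ‖ ^ 2 / 2) ≤ φ v + ‖v‖ ^ 2 / (2 * γ) := by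
  have hφv : -(‖φ‖ * ‖v‖) ≤ φ v := neg_le_of_abs_le (φ.le_opNorm v)
  have : -(γ * ‖φ‖ ^ 2 / 2) + ‖φ‖ * ‖v‖ ≤ ‖v‖ ^ 2 / (2 * γ) := by
    rw [le_div_iff₀ (by positivity)]
    nlinarith [sq_nonneg (‖v‖ - γ * ‖φ‖)]
  linarith

theorem le_add_inner_add_sq_of_lipschitzWith_gradient {E : Type*} [NormedAddCommGroup E]
    [InnerProductSpace ℝ E] [CompleteSpace E] {f : E → ℝ} {f' : E → E} {L : NNReal}
    (hf : ∀ x, HasGradientAt f (f' x) x) (hL : LipschitzWith L f') (x u : E) :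
    f u ≤ f x + ⟪f' x, u - x⟫ + L / 2 * ‖u - x‖ ^ 2 := by
  set v := u - x
  set φ : ℝ → ℝ := fun t => f (x + t • v) - t * ⟪f' x, v⟫ - L / 2 * t ^ 2 * ‖v‖ ^ 2
  have hφ (t : ℝ) : HasDerivAt φ (⟪f' (x + t • v), v⟫ - ⟪f' x, v⟫ - L * t * ‖v‖ ^ 2) t := by
    have hline : HasDerivAt (fun s : ℝ => x + s • v) v t := by
      simpa using ((hasDerivAt_id t).smul_const v).const_add x
    have := (((hf _).hasFDerivAt.comp_hasDerivAt t hline).sub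
      ((hasDerivAt_id t).mul_const ⟪f' x, v⟫)).sub
      (((hasDerivAt_pow 2 t).const_mul (L / 2 : ℝ)).mul_const (‖v‖ ^ 2))
    refine this.congr_deriv ?_
    simp only [InnerProductSpace.toDual_apply_apply]
    ring
  have hφ' {t : ℝ} (ht : 0 ≤ t) : ⟪f' (x + t • v), v⟫ - ⟪f' x, v⟫ - L * t * ‖v‖ ^ 2 ≤ 0 := by
    have hlip : ‖f' (x + t • v) - f' x‖ ≤ L * (t * ‖v‖) := by
      simpa [dist_eq_norm, norm_smul, abs_of_nonneg ht] using hL.dist_le_mul (x + t • v) x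
    calc ⟪f' (x + t • v), v⟫ - ⟪f' x, v⟫ - L * t * ‖v‖ ^ 2
        = ⟪f' (x + t • v) - f' x, v⟫ - L * t * ‖v‖ ^ 2 := by rw [inner_sub_left]
      _ ≤ ‖f' (x + t • v) - f' x‖ * ‖v‖ - L * (t * ‖v‖) * ‖v‖ := by
          rw [sq, ← mul_assoc, ← mul_assoc]; gcongr; exact real_inner_le_norm _ _
      _ ≤ 0 := by nlinarith [norm_nonneg v]
  have hanti : AntitoneOn φ (Set.Ici 0) :=
    antitoneOn_of_hasDerivWithinAt_nonpos (convex_Ici 0)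
      (HasDerivAt.continuousOn fun t _ => hφ t)
      (fun t _ => (hφ t).hasDerivWithinAt)
      (fun t ht => hφ' (interior_subset ht : t ∈ Set.Ici 0))
  have := hanti Set.self_mem_Ici (Set.mem_Ici.2 zero_le_one) zero_le_one
  simp only [φ, one_smul, zero_smul, add_zero, v, add_sub_cancel] at this
  linarith

theorem iInf_add_inner_add_sq_add_ne_bot {E : Type*} [NormedAddCommGroup E]
    [InnerProductSpace ℝ E] {g : E → EReal}
    (hg : ∃ (φ : E →L[ℝ] ℝ) (b : ℝ), ∀ u, ((φ u + b : ℝ) : EReal) ≤ g u)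
    {γ : ℝ} (hγ : 0 < γ) (a : ℝ) (p x : E) :
    ⨅ u, ((a + ⟪p, u - x⟫ + ‖u - x‖ ^ 2 / (2 * γ) : ℝ) : EReal) + g u ≠ ⊥ := by
  obtain ⟨φ, b, hφ⟩ := hg
  set ψ := innerSL ℝ p + φ
  refine ne_bot_of_le_ne_bot (EReal.coe_ne_bot (a + φ x + b - γ * ‖ψ‖ ^ 2 / 2))
    (le_iInf fun u => ?_)
  calc ((a + φ x + b - γ * ‖ψ‖ ^ 2 / 2 : ℝ) : EReal)
      ≤ ((a + ⟪p, u - x⟫ + ‖u - x‖ ^ 2 / (2 * γ) : ℝ) : EReal) + ((φ u + b : ℝ) : EReal) := by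
        rw [← EReal.coe_add, EReal.coe_le_coe_iff]
        have := ψ.neg_le_apply_add_norm_sq hγ (u - x)
        rw [show ψ (u - x) = ⟪p, u - x⟫ + (φ u - φ x) by simp [ψ, inner_sub_right]] at this
        linarith
    _ ≤ _ := add_le_add_right (hφ u) _

theorem fbe_equivalence_general {n : ℕ} (f : Eucl n → ℝ) (f' : Eucl n → Eucl n)
    (g : Eucl n → EReal) (γ : ℝ) (Lf : NNReal)
    (hf' : ∀ x, HasGradientAt f (f' x) x)
    (hLip : LipschitzWith Lf f')
    (hg : ProperLscConvex g)
    (hγ : 0 < γ) (hγL : γ < 1 / Lf) :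
    -- `F x = f x + g x`,
    -- `F_γ x = inf_u (f x + ⟪∇f x, u - x⟫ + g u + ‖u - x‖²/(2γ))`
    (∀ x : Eucl n,
      (∀ y, ((f x : ℝ) : EReal) + g x ≤ ((f y : ℝ) : EReal) + g y) ↔
      (∀ y, (⨅ u : Eucl n, ((f x + ⟪f' x, u - x⟫ + ‖u - x‖ ^ 2 / (2 * γ) : ℝ) : EReal) + g u)
          ≤ (⨅ u : Eucl n, ((f y + ⟪f' y, u - y⟫ + ‖u - y‖ ^ 2 / (2 * γ) : ℝ) : EReal) + g u))) ∧
    (⨅ x : Eucl n, ((f x : ℝ) : EReal) + g x)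
      = (⨅ x : Eucl n, ⨅ u : Eucl n,
          ((f x + ⟪f' x, u - x⟫ + ‖u - x‖ ^ 2 / (2 * γ) : ℝ) : EReal) + g u) := by
  obtain ⟨hne, hbot, hlsc, hconv⟩ := hg
  have hc : 0 < 1 / (2 * γ) - (Lf : ℝ) / 2 := by
    have hLγ : (Lf : ℝ) * γ < 1 := by
      rcases Lf.coe_nonneg.eq_or_lt with hL | hL
      · simp [← hL]
      · linarith [(lt_div_iff₀ hL).1 hγL]
    rw [sub_pos, div_lt_div_iff₀ two_pos (by positivity)]
    linarith
  have hF : LowerSemicontinuous fun x => ((f x : ℝ) : EReal) + g x :=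
    (continuous_coe_real_ereal.comp (continuous_iff_continuousAt.2 fun x =>
      (hf' x).differentiableAt.continuousAt)).lowerSemicontinuous.add' hlsc fun x =>
        EReal.continuousAt_add (Or.inl (EReal.coe_ne_top _)) (Or.inl (EReal.coe_ne_bot _))
  refine isMin_iff_and_iInf_eq_of_quadratic_model hF hc (fun x => by simp) (fun x u => ?_)
    fun x => iInf_add_inner_add_sq_add_ne_bot
      (exists_continuousLinearMap_add_le hne hbot hlsc hconv) hγ (f x) (f' x) x
  rw [← add_assoc, ← EReal.coe_add]
  gcongr ?_ + _
  rw [EReal.coe_le_coe_iff, dist_eq_norm]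
  have := le_add_inner_add_sq_of_lipschitzWith_gradient hf' hLip x u
  linarith [show (1 / (2 * γ) - Lf / 2) * ‖u - x‖ ^ 2 + Lf / 2 * ‖u - x‖ ^ 2
    = ‖u - x‖ ^ 2 / (2 * γ) by ring]

/-- For `γ ∈ (0, 1/L_f)`, `x` minimizes `F = f + g` iff it minimizes the
forward-backward envelope `F_γ`, and `inf F = inf F_γ`. -/
theorem fbe_equivalence {n : ℕ} (f : Eucl n → ℝ) (f' : Eucl n → Eucl n)
    (g : Eucl n → EReal) (γ : ℝ) (Lf : NNReal)
    (hf : ConvexOn ℝ Set.univ f) (hf2 : ContDiff ℝ 2 f)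
    (hf' : ∀ x, HasGradientAt f (f' x) x)
    (hLip : LipschitzWith Lf f')
    (hg : ProperLscConvex g)
    (hγ : 0 < γ) (hγL : γ < 1 / Lf) :
    -- `F x = f x + g x`,
    -- `F_γ x = inf_u (f x + ⟪∇f x, u - x⟫ + g u + ‖u - x‖²/(2γ))`
    (∀ x : Eucl n,
      (∀ y, ((f x : ℝ) : EReal) + g x ≤ ((f y : ℝ) : EReal) + g y) ↔
      (∀ y, (⨅ u : Eucl n, ((f x + ⟪f' x, u - x⟫ + ‖u - x‖ ^ 2 / (2 * γ) : ℝ) : EReal) + g u)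
          ≤ (⨅ u : Eucl n, ((f y + ⟪f' y, u - y⟫ + ‖u - y‖ ^ 2 / (2 * γ) : ℝ) : EReal) + g u))) ∧
    (⨅ x : Eucl n, ((f x : ℝ) : EReal) + g x)
      = (⨅ x : Eucl n, ⨅ u : Eucl n,
          ((f x + ⟪f' x, u - x⟫ + ‖u - x‖ ^ 2 / (2 * γ) : ℝ) : EReal) + g u) :=
  fbe_equivalence_general f f' g γ Lf hf' hLip hg hγ hγL
end
end

section
/- The forward-backward envelope F_γ is continuously differentiable with gradient ∇F_γ(x) = (I - γ∇²f(x)) G_γ(x); consequently, for γ ∈ (0, 1/L_f) the stationary points of F_γ are exactly the minimizers of F = f + g. -/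
/-!
The Moreau envelope `g^γ z = g (p z) + ‖p z - z‖²/(2γ)` is differentiable with gradient
`γ⁻¹(z - p z)`: it lies below the quadratic obtained from the prox inequality at `w` with the
competitor `p z`, and above the one obtained from the prox inequality at `z` with competitor `p w`,
the two being `O(‖w - z‖²)`-close because `p` is nonexpansive. Since
`F_γ y = f y - (γ/2)‖∇f y‖² + g^γ(y - γ∇f y)`, the chain rule and the symmetry of `∇²f` give
`∇F_γ = (I - γ∇²f) G_γ`. For `γ L_f < 1` the operator `I - γ∇²f x` is injective, so `∇F_γ x = 0`
iff `x = p(x - γ∇f x)`; comparing the first-order optimality conditions of the prox and of `f + g`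
(monotonicity of `∂g`) shows that this holds iff `x` minimizes `f + g`.
-/

open scoped RealInnerProductSpace
open Filter Topology

noncomputable section

open Set

theorem ne_top_of_forall_coe_add_le {α : Type*} {g : α → EReal} {h : α → ℝ} {x : α}
    (hproper : ∃ y, g y ≠ ⊤) (hmin : ∀ y, (h x : EReal) + g x ≤ h y + g y) : g x ≠ ⊤ := by
  obtain ⟨y, hy⟩ := hproper
  intro htop
  have hle := hmin y
  rw [htop, EReal.coe_add_top, top_le_iff] at hle
  exact EReal.add_ne_top (EReal.coe_ne_top _) hy hle

theorem isMinOn_add_toReal {α : Type*} {g : α → EReal} {h : α → ℝ} {x : α} (hbot : ∀ y, g y ≠ ⊥)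
    (hx : g x ≠ ⊤) (hmin : ∀ y, (h x : EReal) + g x ≤ h y + g y) :
    IsMinOn (fun y => h y + (g y).toReal) {y | g y ≠ ⊤} x := by
  intro y hy
  have hle := hmin y
  rwa [← EReal.coe_toReal hx (hbot x), ← EReal.coe_toReal hy (hbot y), ← EReal.coe_add,
    ← EReal.coe_add, EReal.coe_le_coe_iff] at hle

theorem ContinuousLinearMap.sub_apply_eq_zero_iff_of_norm_lt_one {𝕜 E : Type*}
    [NontriviallyNormedField 𝕜] [NormedAddCommGroup E] [NormedSpace 𝕜 E] {A : E →L[𝕜] E}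
    (hA : ‖A‖ < 1) (v : E) : v - A v = 0 ↔ v = 0 := by
  refine ⟨fun h => ?_, fun h => by simp [h]⟩
  have hv : ‖v‖ ≤ ‖A‖ * ‖v‖ := by
    calc ‖v‖ = ‖A v‖ := by rw [← sub_eq_zero.1 h]
      _ ≤ ‖A‖ * ‖v‖ := A.le_opNorm v
  exact norm_eq_zero.1 (by nlinarith [norm_nonneg v])

theorem ConvexOn.sub_le_of_isMinOn_add {E : Type*} [NormedAddCommGroup E] [NormedSpace ℝ E]
    {s : Set E} {φ h : E → ℝ} {h' : E →L[ℝ] ℝ} {x u : E}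
    (hφ : ConvexOn ℝ s φ) (hh : HasFDerivAt h h' x) (hmin : IsMinOn (fun y => h y + φ y) s x)
    (hx : x ∈ s) (hu : u ∈ s) : φ x - φ u ≤ h' (u - x) := by
  -- by convexity of `φ`, `ψ` is minimized on `[0, 1]` at `0`, so `ψ' 0 ≥ 0`
  set ψ : ℝ → ℝ := fun t => h (x + t • (u - x)) + t * (φ u - φ x)
  have hline : HasDerivAt (fun t : ℝ => x + t • (u - x)) (u - x) 0 := by
    simpa using ((hasDerivAt_id (0 : ℝ)).smul_const (u - x)).const_add x
  have hψ : HasDerivAt ψ (h' (u - x) + (φ u - φ x)) 0 := by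
    have hh0 : HasFDerivAt h h' (x + (0 : ℝ) • (u - x)) := by rwa [zero_smul, add_zero]
    exact (hh0.comp_hasDerivAt 0 hline).add (hasDerivAt_mul_const _)
  have hψmin : IsMinOn ψ (Icc 0 1) 0 := by
    intro t ⟨ht0, ht1⟩
    have hseg : x + t • (u - x) = (1 - t) • x + t • u := by module
    have hconv := hφ.2 hx hu (sub_nonneg.2 ht1) ht0 (sub_add_cancel 1 t)
    have hle := hmin (hφ.1 hx hu (sub_nonneg.2 ht1) ht0 (sub_add_cancel 1 t))
    simp only [mem_ofPred_eq, smul_eq_mul, ← hseg] at hconv hle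
    simp only [ψ, zero_smul, add_zero, zero_mul, mem_ofPred_eq]
    nlinarith
  have hdir : (1 : ℝ) ∈ posTangentConeAt (Icc (0 : ℝ) 1) 0 := by
    simpa using sub_mem_posTangentConeAt_of_segment_subset (segment_eq_Icc zero_le_one).subset
  have hnonneg := hψmin.localize.hasFDerivWithinAt_nonneg hψ.hasFDerivAt.hasFDerivWithinAt hdir
  rw [ContinuousLinearMap.toSpanSingleton_apply, one_smul] at hnonneg
  linarith

theorem inner_add_norm_sq_div_eq {F : Type*} [NormedAddCommGroup F] [InnerProductSpace ℝ F]
    {d a y : F} {γ : ℝ} (hγ : γ ≠ 0) :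
    ⟪d, a - y⟫ + ‖a - y‖ ^ 2 / (2 * γ) = ‖a - (y - γ • d)‖ ^ 2 / (2 * γ) - γ / 2 * ‖d‖ ^ 2 := by
  rw [show a - (y - γ • d) = (a - y) + γ • d by abel, norm_add_sq_real, real_inner_smul_right,
    norm_smul, mul_pow, Real.norm_eq_abs, sq_abs, real_inner_comm]
  field_simp
  ring

section Gradient

variable {F : Type*} [NormedAddCommGroup F] [InnerProductSpace ℝ F] [CompleteSpace F]

theorem ConvexOn.add_inner_le_of_hasGradientAt {f : F → ℝ} {d x : F} (hf : ConvexOn ℝ univ f)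
    (hd : HasGradientAt f d x) (u : F) : f x + ⟪d, u - x⟫ ≤ f u := by
  -- first-order optimality for `-f + f = 0`, which every point minimizes
  have hopt := hf.sub_le_of_isMinOn_add (h := fun y => -f y) hd.hasFDerivAt.neg
    (fun y _ => by simp) (mem_univ x) (mem_univ u)
  simp only [neg_apply, InnerProductSpace.toDual_apply_apply] at hopt
  linarith

theorem inner_hessian_comm {f : F → ℝ} {f' : F → F} {H : F →L[ℝ] F} {x : F}
    (hf' : ∀ y, HasGradientAt f (f' y) y) (hH : HasFDerivAt f' H x) (u w : F) :
    ⟪H u, w⟫ = ⟪H w, u⟫ := by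
  have hdual : HasFDerivAt (fun y => InnerProductSpace.toDual ℝ F (f' y))
      ((InnerProductSpace.toDual ℝ F).toContinuousLinearEquiv.toContinuousLinearMap.comp H) x :=
    (InnerProductSpace.toDual ℝ F).toContinuousLinearEquiv.hasFDerivAt.comp x hH
  simpa using second_derivative_symmetric (fun y => (hf' y).hasFDerivAt) hdual u w

theorem ContDiff.continuous_hessian {f : F → ℝ} {f' : F → F} {f'' : F → F →L[ℝ] F}
    (hf : ContDiff ℝ 2 f) (hf' : ∀ x, HasGradientAt f (f' x) x)
    (hf'' : ∀ x, HasFDerivAt f' (f'' x) x) :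
    Continuous f'' := by
  have hgrad : f' = fun y => (InnerProductSpace.toDual ℝ F).symm (fderiv ℝ f y) := by
    funext y
    simp [(hf' y).hasFDerivAt.fderiv]
  have hC1 : ContDiff ℝ 1 f' := by
    rw [hgrad]
    exact (InnerProductSpace.toDual ℝ F).symm.contDiff.comp (hf.fderiv_right (by norm_num))
  rw [show f'' = fderiv ℝ f' from funext fun x => (hf'' x).fderiv.symm]
  exact hC1.continuous_fderiv one_ne_zero

theorem hasGradientAt_of_abs_sub_inner_le {φ : F → ℝ} {v z : F} (C : ℝ)
    (h : ∀ w, |φ w - φ z - ⟪v, w - z⟫| ≤ C * ‖w - z‖ ^ 2) : HasGradientAt φ v z := by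
  rw [hasGradientAt_iff_isLittleO]
  refine Asymptotics.IsBigO.trans_isLittleO ?_
    (Asymptotics.isLittleO_pow_sub_sub z one_lt_two)
  refine Asymptotics.IsBigO.of_bound C (Eventually.of_forall fun w => ?_)
  simpa [Real.norm_eq_abs] using h w

end Gradient

section Prox

variable {n : ℕ} {γ : ℝ} {g : Eucl n → EReal} {p : Eucl n → Eucl n}

theorem ProperLscConvex.convexOn_toReal (hg : ProperLscConvex g) :
    ConvexOn ℝ {x | g x ≠ ⊤} (fun x => (g x).toReal) := by
  obtain ⟨-, hbot, -, hconv⟩ := hg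
  have hcomb : ∀ ⦃x⦄, g x ≠ ⊤ → ∀ ⦃y⦄, g y ≠ ⊤ → ∀ ⦃a b : ℝ⦄, 0 ≤ a → 0 ≤ b → a + b = 1 →
      g (a • x + b • y) ≤ ((a * (g x).toReal + b * (g y).toReal : ℝ) : EReal) := by
    intro x hx y hy a b ha hb hab
    rw [EReal.coe_add, EReal.coe_mul, EReal.coe_mul, EReal.coe_toReal hx (hbot x),
      EReal.coe_toReal hy (hbot y)]
    exact hconv x y a b ha hb hab
  refine ⟨fun x hx y hy a b ha hb hab => ((hcomb hx hy ha hb hab).trans_lt (EReal.coe_lt_top _)).ne,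
    fun x hx y hy a b ha hb hab => ?_⟩
  have hle := hcomb hx hy ha hb hab
  rwa [← EReal.coe_toReal (ne_top_of_le_ne_top (EReal.coe_ne_top _) hle) (hbot _),
    EReal.coe_le_coe_iff] at hle

theorem IsProx.coe_add_le (hp : IsProx γ g p) (z u : Eucl n) :
    ((‖p z - z‖ ^ 2 / (2 * γ) : ℝ) : EReal) + g (p z)
      ≤ ((‖u - z‖ ^ 2 / (2 * γ) : ℝ) : EReal) + g u := by
  simpa only [add_comm] using hp z u

theorem IsProx.apply_ne_top (hp : IsProx γ g p) (hg : ∃ x, g x ≠ ⊤) (z : Eucl n) :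
    g (p z) ≠ ⊤ :=
  ne_top_of_forall_coe_add_le (h := fun u => ‖u - z‖ ^ 2 / (2 * γ)) hg (hp.coe_add_le z)

theorem IsProx.isMinOn (hp : IsProx γ g p) (hg : ProperLscConvex g) (z : Eucl n) :
    IsMinOn (fun u => ‖u - z‖ ^ 2 / (2 * γ) + (g u).toReal) {u | g u ≠ ⊤} (p z) :=
  isMinOn_add_toReal (h := fun u => ‖u - z‖ ^ 2 / (2 * γ)) hg.2.1 (hp.apply_ne_top hg.1 z)
    (hp.coe_add_le z)

theorem IsProx.toReal_add_inner_le (hp : IsProx γ g p) (hg : ProperLscConvex g) (z : Eucl n)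
    {u : Eucl n} (hu : g u ≠ ⊤) : (g (p z)).toReal + ⟪z - p z, u - p z⟫ / γ ≤ (g u).toReal := by
  have hd : HasFDerivAt (fun u : Eucl n => ‖u - z‖ ^ 2 / (2 * γ))
      ((2 * γ)⁻¹ • 2 • innerSL ℝ (p z - z)) (p z) := by
    simpa only [div_eq_mul_inv, id_eq, ContinuousLinearMap.comp_id] using
      (((hasFDerivAt_id (p z)).sub_const z).norm_sq).mul_const (2 * γ)⁻¹
  have h := hg.convexOn_toReal.sub_le_of_isMinOn_add hd (hp.isMinOn hg z)
    (hp.apply_ne_top hg.1 z) hu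
  have hslope : ((2 * γ)⁻¹ • 2 • innerSL ℝ (p z - z)) (u - p z) = -(⟪z - p z, u - p z⟫ / γ) := by
    rw [← neg_sub z (p z)]
    simp only [smul_apply, innerSL_apply_apply, inner_neg_left, smul_eq_mul,
      nsmul_eq_mul, mul_inv]
    ring
  linarith

theorem IsProx.norm_sub_sq_le_inner (hγ : 0 < γ) (hp : IsProx γ g p) (hg : ProperLscConvex g)
    (a b : Eucl n) : ‖p a - p b‖ ^ 2 ≤ ⟪a - b, p a - p b⟫ := by
  have ha := hp.toReal_add_inner_le hg a (hp.apply_ne_top hg.1 b)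
  have hb := hp.toReal_add_inner_le hg b (hp.apply_ne_top hg.1 a)
  have hsum : (⟪a - p a, p b - p a⟫ + ⟪b - p b, p a - p b⟫) / γ ≤ 0 := by
    rw [add_div]; linarith
  have hexpand : ⟪a - p a, p b - p a⟫ + ⟪b - p b, p a - p b⟫
      = ‖p a - p b‖ ^ 2 - ⟪a - b, p a - p b⟫ := by
    rw [← real_inner_self_eq_norm_sq]
    simp only [inner_sub_left, inner_sub_right, real_inner_comm (p a) (p b)]
    ring
  rw [hexpand, div_le_iff₀ hγ, zero_mul] at hsum
  linarith

theorem IsProx.lipschitzWith_one (hγ : 0 < γ) (hp : IsProx γ g p) (hg : ProperLscConvex g) :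
    LipschitzWith 1 p :=
  LipschitzWith.of_dist_le_mul fun a b => by
    rw [NNReal.coe_one, one_mul, dist_eq_norm, dist_eq_norm]
    have hfirm := hp.norm_sub_sq_le_inner hγ hg a b
    have hcs := real_inner_le_norm (a - b) (p a - p b)
    nlinarith [norm_nonneg (p a - p b), norm_nonneg (a - b)]

-- the Moreau envelope `g^γ z = min_u g u + ‖u - z‖²/(2γ)`, the minimum being attained at `p z`
def moreauEnv (γ : ℝ) (g : Eucl n → EReal) (p : Eucl n → Eucl n) (z : Eucl n) : ℝ :=
  (g (p z)).toReal + ‖p z - z‖ ^ 2 / (2 * γ)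

theorem IsProx.moreauEnv_le (hp : IsProx γ g p) (hg : ProperLscConvex g) (z w : Eucl n) :
    moreauEnv γ g p w
      ≤ moreauEnv γ g p z + ⟪z - p z, w - z⟫ / γ + ‖w - z‖ ^ 2 / (2 * γ) := by
  have hmin : ‖p w - w‖ ^ 2 / (2 * γ) + (g (p w)).toReal
      ≤ ‖p z - w‖ ^ 2 / (2 * γ) + (g (p z)).toReal :=
    hp.isMinOn hg w (hp.apply_ne_top hg.1 z)
  have hexpand : ‖p z - w‖ ^ 2 / (2 * γ)
      = ‖p z - z‖ ^ 2 / (2 * γ) + ⟪z - p z, w - z⟫ / γ + ‖w - z‖ ^ 2 / (2 * γ) := by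
    rw [show p z - w = (p z - z) - (w - z) by abel, norm_sub_sq_real, ← neg_sub z (p z),
      inner_neg_left, norm_neg]
    ring
  rw [moreauEnv, moreauEnv]
  linarith

theorem IsProx.hasGradientAt_moreauEnv (hγ : 0 < γ) (hp : IsProx γ g p) (hg : ProperLscConvex g)
    (z : Eucl n) : HasGradientAt (moreauEnv γ g p) (γ⁻¹ • (z - p z)) z := by
  refine hasGradientAt_of_abs_sub_inner_le (1 / (2 * γ)) fun w => ?_
  rw [real_inner_smul_left, inv_mul_eq_div, one_div_mul_eq_div, abs_le]
  constructor
  · have hle := hp.moreauEnv_le hg w z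
    have hmono : ⟪p w - p z, w - z⟫ ≤ ‖w - z‖ ^ 2 := by
      calc ⟪p w - p z, w - z⟫ ≤ ‖p w - p z‖ * ‖w - z‖ := real_inner_le_norm _ _
        _ ≤ ‖w - z‖ * ‖w - z‖ := by
          gcongr
          simpa [dist_eq_norm] using (hp.lipschitzWith_one hγ hg).dist_le_mul w z
        _ = ‖w - z‖ ^ 2 := (sq _).symm
    have hinner : ⟪w - p w, z - w⟫ / γ
        = -(⟪z - p z, w - z⟫ / γ) - (‖w - z‖ ^ 2 - ⟪p w - p z, w - z⟫) / γ := by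
      rw [← real_inner_self_eq_norm_sq, ← neg_sub w z]
      simp only [inner_neg_right, inner_sub_left]
      ring
    have hgap : 0 ≤ (‖w - z‖ ^ 2 - ⟪p w - p z, w - z⟫) / γ := div_nonneg (by linarith) hγ.le
    rw [norm_sub_rev z w, hinner] at hle
    linarith
  · linarith [hp.moreauEnv_le hg z w]

theorem IsProx.apply_sub_smul_eq_self_iff {f : Eucl n → ℝ} {d x : Eucl n} (hγ : 0 < γ)
    (hp : IsProx γ g p) (hg : ProperLscConvex g) (hf : ConvexOn ℝ univ f)
    (hd : HasGradientAt f d x) :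
    p (x - γ • d) = x ↔ ∀ y, ((f x : ℝ) : EReal) + g x ≤ f y + g y := by
  set z := x - γ • d
  have hbot := hg.2.1
  constructor
  · intro hfix y
    by_cases hy : g y = ⊤
    · simp [hy]
    have hx : g x ≠ ⊤ := hfix ▸ hp.apply_ne_top hg.1 z
    have hprox := hp.toReal_add_inner_le hg z hy
    have hzx : ⟪z - x, y - x⟫ / γ = -⟪d, y - x⟫ := by
      rw [show z - x = -(γ • d) by simp [z], inner_neg_left, real_inner_smul_left]
      field_simp
    rw [hfix, hzx] at hprox
    have hconv := hf.add_inner_le_of_hasGradientAt hd y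
    rw [← EReal.coe_toReal hx (hbot x), ← EReal.coe_toReal hy (hbot y), ← EReal.coe_add,
      ← EReal.coe_add, EReal.coe_le_coe_iff]
    linarith
  · intro hmin
    have hx : g x ≠ ⊤ := ne_top_of_forall_coe_add_le hg.1 hmin
    have hopt := hg.convexOn_toReal.sub_le_of_isMinOn_add hd.hasFDerivAt
      (isMinOn_add_toReal hbot hx hmin) hx (hp.apply_ne_top hg.1 z)
    have hprox := hp.toReal_add_inner_le hg z hx
    have hzw : ⟪z - p z, x - p z⟫ / γ = ‖x - p z‖ ^ 2 / γ + ⟪d, p z - x⟫ := by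
      rw [show z - p z = (x - p z) - γ • d by simp [z]; abel, inner_sub_left,
        real_inner_self_eq_norm_sq, real_inner_smul_left, ← neg_sub x (p z), inner_neg_right]
      field_simp
      ring
    rw [InnerProductSpace.toDual_apply_apply] at hopt
    have hsq : ‖x - p z‖ ^ 2 ≤ 0 := by
      simpa using (div_le_iff₀ hγ).1 (show ‖x - p z‖ ^ 2 / γ ≤ 0 by linarith)
    have hnorm : ‖x - p z‖ = 0 := pow_eq_zero_iff two_ne_zero |>.1 (le_antisymm hsq (sq_nonneg _))
    exact (sub_eq_zero.1 (norm_eq_zero.1 hnorm)).symm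

theorem IsProx.hasGradientAt_fbe {f : Eucl n → ℝ} {f' : Eucl n → Eucl n}
    {H : Eucl n →L[ℝ] Eucl n} {x : Eucl n} (hγ : 0 < γ) (hp : IsProx γ g p) (hg : ProperLscConvex g)
    (hf' : ∀ y, HasGradientAt f (f' y) y) (hH : HasFDerivAt f' H x) :
    HasGradientAt
      (fun y => f y + ⟪f' y, p (y - γ • f' y) - y⟫
        + (g (p (y - γ • f' y))).toReal + ‖p (y - γ • f' y) - y‖ ^ 2 / (2 * γ))
      (γ⁻¹ • (x - p (x - γ • f' x)) - γ • H (γ⁻¹ • (x - p (x - γ • f' x)))) x := by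
  set z := x - γ • f' x
  set G := γ⁻¹ • (x - p z)
  have hfun : (fun y => f y + ⟪f' y, p (y - γ • f' y) - y⟫
        + (g (p (y - γ • f' y))).toReal + ‖p (y - γ • f' y) - y‖ ^ 2 / (2 * γ))
      = fun y => f y - γ / 2 * ‖f' y‖ ^ 2 + moreauEnv γ g p (y - γ • f' y) := by
    funext y
    have := inner_add_norm_sq_div_eq (d := f' y) (a := p (y - γ • f' y)) (y := y) hγ.ne'
    rw [moreauEnv]
    linarith
  have hshift : HasFDerivAt (fun y => y - γ • f' y) (ContinuousLinearMap.id ℝ _ - γ • H) x :=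
    (hasFDerivAt_id x).sub (hH.const_smul γ)
  have hsum := ((hf' x).hasFDerivAt.sub (hH.norm_sq.const_mul (γ / 2))).add
    ((hp.hasGradientAt_moreauEnv hγ hg z).hasFDerivAt.comp x hshift)
  rw [hfun, hasGradientAt_iff_hasFDerivAt]
  refine hsum.congr_fderiv ?_
  have hGz : γ⁻¹ • (z - p z) = G - f' x := by
    simp only [z, G]
    rw [sub_right_comm, smul_sub (γ⁻¹) _ (γ • f' x), smul_smul, inv_mul_cancel₀ hγ.ne', one_smul]
  ext w
  simp only [add_apply, sub_apply, smul_apply,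
    ContinuousLinearMap.comp_apply, InnerProductSpace.toDual_apply_apply, hGz,
    ContinuousLinearMap.id_apply, innerSL_apply_apply, smul_eq_mul, nsmul_eq_mul,
    inner_sub_left, inner_sub_right, inner_smul_right, real_inner_smul_left]
  rw [inner_hessian_comm hf' hH G w, real_inner_comm G (H w)]
  ring

end Prox

theorem fbe_gradient_and_stationary_general {n : ℕ} (f : Eucl n → ℝ) (f' : Eucl n → Eucl n)
    (f'' : Eucl n → Eucl n →L[ℝ] Eucl n)
    (g : Eucl n → EReal) (γ : ℝ) (p : Eucl n → Eucl n) (Lf : NNReal)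
    (hf : ConvexOn ℝ Set.univ f) (hf2 : ContDiff ℝ 2 f)
    (hf' : ∀ x, HasGradientAt f (f' x) x)
    (hf'' : ∀ x, HasFDerivAt f' (f'' x) x)
    (hLip : LipschitzWith Lf f')
    (hg : ProperLscConvex g)
    (hγ : 0 < γ)
    (hp : IsProx γ g p) :
    -- with `P x = prox_{γg}(x - γ∇f x)`, `G x = γ⁻¹(x - P x)` and
    -- `F_γ x = f x + ⟪∇f x, P x - x⟫ + g (P x) + ‖P x - x‖²/(2γ)`:
    (∀ x : Eucl n, HasGradientAt
        (fun y => f y + ⟪f' y, p (y - γ • f' y) - y⟫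
            + (g (p (y - γ • f' y))).toReal + ‖p (y - γ • f' y) - y‖ ^ 2 / (2 * γ))
        (γ⁻¹ • (x - p (x - γ • f' x))
          - γ • f'' x (γ⁻¹ • (x - p (x - γ • f' x)))) x) ∧
    Continuous (fun x : Eucl n =>
        γ⁻¹ • (x - p (x - γ • f' x)) - γ • f'' x (γ⁻¹ • (x - p (x - γ • f' x)))) ∧
    (γ < 1 / Lf → ∀ x : Eucl n,
      (γ⁻¹ • (x - p (x - γ • f' x)) - γ • f'' x (γ⁻¹ • (x - p (x - γ • f' x))) = 0
        ↔ ∀ y, ((f x : ℝ) : EReal) + g x ≤ ((f y : ℝ) : EReal) + g y)) := by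
  refine ⟨fun x => hp.hasGradientAt_fbe hγ hg hf' (hf'' x), ?_, fun hγL x => ?_⟩
  · have hf'c : Continuous f' := continuous_iff_continuousAt.2 fun x => (hf'' x).continuousAt
    have hG : Continuous fun x => γ⁻¹ • (x - p (x - γ • f' x)) :=
      ((continuous_id.sub ((hp.lipschitzWith_one hγ hg).continuous.comp
        (continuous_id.sub (hf'c.const_smul γ)))).const_smul γ⁻¹)
    exact hG.sub (((hf2.continuous_hessian hf' hf'').clm_apply hG).const_smul γ)
  · have hLf : 0 < (Lf : ℝ) := by
      by_contra h
      rw [le_antisymm (not_lt.1 h) Lf.coe_nonneg, div_zero] at hγL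
      exact hγL.not_gt hγ
    have hcontr : ‖γ • f'' x‖ < 1 := by
      rw [norm_smul, Real.norm_of_nonneg hγ.le]
      calc γ * ‖f'' x‖ ≤ γ * Lf := by gcongr; exact (hf'' x).le_of_lipschitz hLip
        _ < 1 := (lt_div_iff₀ hLf).1 hγL
    rw [← smul_apply, (γ • f'' x).sub_apply_eq_zero_iff_of_norm_lt_one hcontr, smul_eq_zero,
      or_iff_right (inv_ne_zero hγ.ne'), sub_eq_zero, eq_comm]
    exact hp.apply_sub_smul_eq_self_iff hγ hg hf (hf' x)

/-- `F_γ` is continuously differentiable with `∇F_γ(x) = (I - γ∇²f(x)) G_γ(x)`, and for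
`γ ∈ (0, 1/L_f)` the stationary points of `F_γ` are exactly the minimizers of `F = f + g`. -/
theorem fbe_gradient_and_stationary {n : ℕ} (f : Eucl n → ℝ) (f' : Eucl n → Eucl n)
    (f'' : Eucl n → Eucl n →L[ℝ] Eucl n)
    (g : Eucl n → EReal) (γ : ℝ) (p : Eucl n → Eucl n) (Lf : NNReal)
    (hf : ConvexOn ℝ Set.univ f) (hf2 : ContDiff ℝ 2 f)
    (hf' : ∀ x, HasGradientAt f (f' x) x)
    (hf'' : ∀ x, HasFDerivAt f' (f'' x) x)
    (hLip : LipschitzWith Lf f')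
    (hg : ProperLscConvex g)
    (hγ : 0 < γ)
    (hp : IsProx γ g p)
    (hfin : ∀ y, g (p y) ≠ ⊤) :
    -- with `P x = prox_{γg}(x - γ∇f x)`, `G x = γ⁻¹(x - P x)` and
    -- `F_γ x = f x + ⟪∇f x, P x - x⟫ + g (P x) + ‖P x - x‖²/(2γ)`:
    (∀ x : Eucl n, HasGradientAt
        (fun y => f y + ⟪f' y, p (y - γ • f' y) - y⟫
            + (g (p (y - γ • f' y))).toReal + ‖p (y - γ • f' y) - y‖ ^ 2 / (2 * γ))
        (γ⁻¹ • (x - p (x - γ • f' x))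
          - γ • f'' x (γ⁻¹ • (x - p (x - γ • f' x)))) x) ∧
    Continuous (fun x : Eucl n =>
        γ⁻¹ • (x - p (x - γ • f' x)) - γ • f'' x (γ⁻¹ • (x - p (x - γ • f' x)))) ∧
    (γ < 1 / Lf → ∀ x : Eucl n,
      (γ⁻¹ • (x - p (x - γ • f' x)) - γ • f'' x (γ⁻¹ • (x - p (x - γ • f' x))) = 0
        ↔ ∀ y, ((f x : ℝ) : EReal) + g x ≤ ((f y : ℝ) : EReal) + g y)) :=
  fbe_gradient_and_stationary_general f f' f'' g γ p Lf hf hf2 hf' hf'' hLip hg hγ hp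
end
end

section
/- Let Q be a symmetric positive semidefinite n×n matrix with μ = λ_min(Q), L = λ_max(Q). Then λ_min(Q(I - γQ)) = μ(1 - γμ) if 0 < γ ≤ 1/(L+μ), and λ_min(Q(I - γQ)) = L(1 - γL) if 1/(L+μ) ≤ γ < 1/L. -/
/-! The spectrum of `Q * (1 - γ • Q)` is the image of the spectrum `S ⊆ [μ, L]` of `Q` under the
parabola `f x = x * (1 - γ * x)`. For `γ > 0` it is concave, so its minimum over `S` is attained at
`μ` or at `L`, and the factorisations
`f x - f μ = (x - μ) * (1 - γ * (x + μ))` and `f x - f L = (L - x) * (γ * (x + L) - 1)`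
show which endpoint wins on either side of `γ = 1 / (L + μ)`. -/

theorem spectrum_mul_one_sub_smul {A : Type*} [Ring A] [StarRing A] [TopologicalSpace A]
    [Algebra ℝ A] [ContinuousFunctionalCalculus ℝ A IsSelfAdjoint] {a : A} (ha : IsSelfAdjoint a)
    (γ : ℝ) : spectrum ℝ (a * (1 - γ • a)) = (fun x ↦ x * (1 - γ * x)) '' spectrum ℝ a := by
  have hcfc : a * (1 - γ • a) = cfc (fun x : ℝ ↦ x * (1 - γ * x)) a := by
    rw [cfc_mul .., cfc_id' ℝ a, cfc_sub .., cfc_const_one ℝ a, cfc_const_mul_id γ a]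
  rw [hcfc, cfc_map_spectrum ..]

open scoped ComplexOrder in
theorem Matrix.PosSemidef.nonneg_of_mem_spectrum {n 𝕜 : Type*} [Fintype n] [DecidableEq n]
    [RCLike 𝕜] {Q : Matrix n n 𝕜} (hQ : Q.PosSemidef) {x : ℝ} (hx : x ∈ spectrum ℝ Q) : 0 ≤ x := by
  obtain ⟨i, rfl⟩ := hQ.isHermitian.spectrum_real_eq_range_eigenvalues ▸ hx
  exact hQ.eigenvalues_nonneg i

theorem mul_one_sub_mul_le_of_le_one_div_add {γ μ L x : ℝ} (hγ : 0 < γ) (hγ' : γ ≤ 1 / (L + μ))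
    (hμx : μ ≤ x) (hxL : x ≤ L) : μ * (1 - γ * μ) ≤ x * (1 - γ * x) := by
  have hLμ : 0 < L + μ := by
    by_contra! h
    have : 1 / (L + μ) ≤ 0 := one_div_nonpos.2 h
    linarith
  have hγLμ : γ * (L + μ) ≤ 1 := (le_div_iff₀ hLμ).1 (by simpa using hγ')
  have hfactor : 0 ≤ 1 - γ * (x + μ) := by nlinarith
  calc μ * (1 - γ * μ) ≤ μ * (1 - γ * μ) + (x - μ) * (1 - γ * (x + μ)) :=
        le_add_of_nonneg_right (mul_nonneg (sub_nonneg.2 hμx) hfactor)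
    _ = x * (1 - γ * x) := by ring

theorem mul_one_sub_mul_le_of_one_div_add_le {γ μ L x : ℝ} (hμ : 0 ≤ μ) (hγ : 1 / (L + μ) ≤ γ)
    (hγ' : γ < 1 / L) (hμx : μ ≤ x) (hxL : x ≤ L) : L * (1 - γ * L) ≤ x * (1 - γ * x) := by
  have hLμ : 0 < L + μ := by
    rcases (add_nonneg (hμ.trans (hμx.trans hxL)) hμ).lt_or_eq with h | h
    · exact h
    · have hL : L = 0 := by linarith
      have hμ0 : μ = 0 := by linarith
      simp [hL, hμ0] at hγ hγ'
      linarith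
  have hγLμ : 1 ≤ γ * (L + μ) := (div_le_iff₀ hLμ).1 (by simpa using hγ)
  have hfactor : 0 ≤ γ * (x + L) - 1 := by
    nlinarith [(one_div_pos.2 hLμ).trans_le hγ]
  calc L * (1 - γ * L) ≤ L * (1 - γ * L) + (L - x) * (γ * (x + L) - 1) :=
        le_add_of_nonneg_right (mul_nonneg (sub_nonneg.2 hxL) hfactor)
    _ = x * (1 - γ * x) := by ring

theorem isLeast_image_of_forall_le {α β : Type*} [Preorder β] {f : α → β} {s : Set α} {a : α}
    (ha : a ∈ s) (h : ∀ x ∈ s, f a ≤ f x) : IsLeast (f '' s) (f a) :=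
  ⟨Set.mem_image_of_mem f ha, Set.forall_mem_image.2 h⟩

/-- For `Q` symmetric psd with `μ = λ_min(Q)`, `L = λ_max(Q)`:
`λ_min(Q(I - γQ)) = μ(1 - γμ)` if `0 < γ ≤ 1/(L+μ)`, and
`λ_min(Q(I - γQ)) = L(1 - γL)` if `1/(L+μ) ≤ γ < 1/L`. -/
theorem lambda_min_Q_I_sub_gammaQ {n : ℕ} (Q : Matrix (Fin n) (Fin n) ℝ) (γ μ L : ℝ)
    (hQ : Q.PosSemidef)
    (hμ : IsLeast (spectrum ℝ Q) μ)
    (hL : IsGreatest (spectrum ℝ Q) L) :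
    (0 < γ → γ ≤ 1 / (L + μ) →
      IsLeast (spectrum ℝ (Q * (1 - γ • Q))) (μ * (1 - γ * μ))) ∧
    (1 / (L + μ) ≤ γ → γ < 1 / L →
      IsLeast (spectrum ℝ (Q * (1 - γ • Q))) (L * (1 - γ * L))) := by
  rw [spectrum_mul_one_sub_smul hQ.isHermitian]
  refine ⟨fun hγ hγ' ↦ isLeast_image_of_forall_le hμ.1 fun x hx ↦ ?_,
    fun hγ hγ' ↦ isLeast_image_of_forall_le hL.1 fun x hx ↦ ?_⟩
  · exact mul_one_sub_mul_le_of_le_one_div_add hγ hγ' (hμ.2 hx) (hL.2 hx)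
  · exact mul_one_sub_mul_le_of_one_div_add_le (hQ.nonneg_of_mem_spectrum hμ.1) hγ hγ'
      (hμ.2 hx) (hL.2 hx)
end

section
/- For any γ ∈ (0, 1/L_f] and any x ∈ R^n, ‖G_γ(x)‖² ≥ 2μ_f (F(P_γ(x)) - F_⋆), where F_⋆ = inf F. -/
open scoped RealInnerProductSpace
open Filter Topology

noncomputable section

open scoped NNReal

/-!
Write `q = P_γ(x)`, `G = γ⁻¹ (x - q)` and `y = x - γ ∇f(x)`. Optimality of the proximal point
gives `γ⁻¹ (y - q) ∈ ∂g(q)`; adding this subgradient inequality for `g` at `x⋆` to the descent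
lemma for `f` at `q` (where `γ L_f ≤ 1` absorbs the quadratic term) and to strong convexity of `f`
at `x⋆`, the gradient terms cancel and `F(q) - F⋆ ≤ ⟪G, x - x⋆⟫ - μ/2 ‖x - x⋆‖²`. Maximising the
right-hand side over `x - x⋆` bounds it by `‖G‖² / (2μ)`.
-/

lemma le_of_forall_mem_Ioc_le_add_mul {a b c : ℝ} (h : ∀ t ∈ Set.Ioc (0 : ℝ) 1, a ≤ b + t * c) :
    a ≤ b := by
  have hlim : Tendsto (fun t : ℝ ↦ b + t * c) (𝓝[>] 0) (𝓝 b) := by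
    have h0 : Tendsto (fun t : ℝ ↦ b + t * c) (𝓝 0) (𝓝 (b + 0 * c)) :=
      (by fun_prop : Continuous fun t : ℝ ↦ b + t * c).tendsto 0
    rw [zero_mul, add_zero] at h0
    exact h0.mono_left nhdsWithin_le_nhds
  exact ge_of_tendsto hlim (eventually_of_mem (Ioc_mem_nhdsGT one_pos) h)

lemma EReal.exists_coe_of_add_coe_le {u v : EReal} {a b : ℝ} (h : u + a ≤ v + b) (hv : v ≠ ⊤)
    (hu : u ≠ ⊥) : ∃ r : ℝ, u = r := by
  refine ⟨u.toReal, (EReal.coe_toReal ?_ hu).symm⟩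
  have hua : u + a ≠ ⊤ := ne_top_of_le_ne_top (EReal.add_ne_top hv (EReal.coe_ne_top b)) h
  exact (EReal.add_ne_top_iff_ne_top_left (EReal.coe_ne_bot a) (EReal.coe_ne_top a)).mp hua

lemma two_mul_mul_inner_sub_sq_mul_norm_sq_le {E : Type*} [NormedAddCommGroup E]
    [InnerProductSpace ℝ E] (μ : ℝ) (u d : E) :
    2 * μ * ⟪u, d⟫ - μ ^ 2 * ‖d‖ ^ 2 ≤ ‖u‖ ^ 2 := by
  have h := norm_sub_sq_real u (μ • d)
  rw [real_inner_smul_right, norm_smul, mul_pow, Real.norm_eq_abs, sq_abs] at h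
  nlinarith [sq_nonneg ‖u - μ • d‖]

lemma norm_image_sub_sub_le_of_lipschitzWith_fderiv {E F : Type*} [NormedAddCommGroup E]
    [NormedSpace ℝ E] [NormedAddCommGroup F] [NormedSpace ℝ F] {f : E → F} {f' : E → E →L[ℝ] F}
    {L : ℝ≥0} (hf : ∀ x, HasFDerivAt f (f' x) x) (hL : LipschitzWith L f') (x y : E) :
    ‖f y - f x - f' x (y - x)‖ ≤ L * ‖y - x‖ ^ 2 := by
  have hbound : ∀ z ∈ segment ℝ x y, ‖f' z - f' x‖ ≤ L * ‖y - x‖ := fun z hz ↦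
    calc ‖f' z - f' x‖ ≤ L * ‖z - x‖ := hL.norm_sub_le z x
      _ ≤ L * ‖y - x‖ := by gcongr; exact norm_sub_le_of_mem_segment hz
  calc ‖f y - f x - f' x (y - x)‖ ≤ L * ‖y - x‖ * ‖y - x‖ :=
        (convex_segment x y).norm_image_sub_le_of_norm_hasFDerivWithin_le'
          (fun z _ ↦ (hf z).hasFDerivWithinAt) hbound (left_mem_segment ℝ x y)
          (right_mem_segment ℝ x y)
    _ = L * ‖y - x‖ ^ 2 := by ring

lemma le_add_inner_add_mul_norm_sq_of_lipschitzWith_gradient {E : Type*}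
    [NormedAddCommGroup E] [InnerProductSpace ℝ E] [CompleteSpace E] {f : E → ℝ} {f' : E → E}
    {L : ℝ≥0} (hf : ∀ x, HasGradientAt f (f' x) x) (hL : LipschitzWith L f') (x y : E) :
    f y ≤ f x + ⟪f' x, y - x⟫ + L * ‖y - x‖ ^ 2 := by
  have hL' : LipschitzWith L (fun z ↦ InnerProductSpace.toDual ℝ E (f' z)) := by
    refine LipschitzWith.of_dist_le_mul fun z w ↦ ?_
    rw [dist_eq_norm, ← map_sub, LinearIsometryEquiv.norm_map, ← dist_eq_norm]
    exact hL.dist_le_mul z w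
  have h := norm_image_sub_sub_le_of_lipschitzWith_fderiv (fun z ↦ (hf z).hasFDerivAt) hL' x y
  rw [InnerProductSpace.toDual_apply_apply, Real.norm_eq_abs] at h
  linarith [le_abs_self (f y - f x - ⟪f' x, y - x⟫)]

lemma IsProx.add_inner_le {n : ℕ} {γ : ℝ} {g : Eucl n → EReal} {p : Eucl n → Eucl n}
    (hp : IsProx γ g p)
    (hconv : ∀ x y : Eucl n, ∀ a b : ℝ, 0 ≤ a → 0 ≤ b → a + b = 1 →
      g (a • x + b • y) ≤ (a : EReal) * g x + (b : EReal) * g y)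
    {y z : Eucl n} {a b : ℝ} (ha : g (p y) = a) (hb : g z = b) :
    a + ⟪γ⁻¹ • (y - p y), z - p y⟫ ≤ b := by
  set q := p y
  -- compare `q` with the points `(1 - t) • q + t • z` of the segment towards `z`, then let `t → 0⁺`
  refine le_of_forall_mem_Ioc_le_add_mul (c := ‖z - q‖ ^ 2 / (2 * γ)) fun t ⟨ht0, ht1⟩ ↦ ?_
  have hcv := hconv q z (1 - t) t (by linarith) ht0.le (by ring)
  rw [ha, hb] at hcv
  have hmin := (hp y ((1 - t) • q + t • z)).trans (add_le_add_left hcv _)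
  rw [ha, show (1 - t) • q + t • z - y = (q - y) + t • (z - q) by module] at hmin
  have hreal : a + ‖q - y‖ ^ 2 / (2 * γ)
      ≤ (1 - t) * a + t * b + ‖(q - y) + t • (z - q)‖ ^ 2 / (2 * γ) := by
    exact_mod_cast hmin
  rw [norm_add_sq_real, real_inner_smul_right, norm_smul, Real.norm_eq_abs, abs_of_pos ht0,
    mul_pow] at hreal
  rw [real_inner_smul_left, ← neg_sub q y, inner_neg_left]
  have hscaled : t * (a + γ⁻¹ * -⟪q - y, z - q⟫) ≤ t * (b + t * (‖z - q‖ ^ 2 / (2 * γ))) := by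
    linear_combination hreal
  exact le_of_mul_le_mul_left hscaled ht0

lemma sub_le_inner_sub_of_proxGrad {E : Type*} [NormedAddCommGroup E] [InnerProductSpace ℝ E]
    {f : E → ℝ} {w x q z : E} {γ μ L a b : ℝ} (hγ : 0 < γ) (hγL : γ * L ≤ 1)
    (hprox : a + ⟪γ⁻¹ • (x - γ • w - q), z - q⟫ ≤ b)
    (hdesc : f q ≤ f x + ⟪w, q - x⟫ + L * ‖q - x‖ ^ 2)
    (hsc : f x + ⟪w, z - x⟫ + μ / 2 * ‖z - x‖ ^ 2 ≤ f z) :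
    f q + a - (f z + b) ≤ ⟪γ⁻¹ • (x - q), x - z⟫ - μ / 2 * ‖x - z‖ ^ 2 := by
  obtain ⟨G, rfl⟩ : ∃ G, q = x - γ • G :=
    ⟨γ⁻¹ • (x - q), by rw [smul_smul, mul_inv_cancel₀ hγ.ne', one_smul, sub_sub_cancel]⟩
  have hG : γ⁻¹ • (x - (x - γ • G)) = G := by
    rw [sub_sub_cancel, smul_smul, inv_mul_cancel₀ hγ.ne', one_smul]
  have hGw : γ⁻¹ • (x - γ • w - (x - γ • G)) = G - w := by
    rw [show x - γ • w - (x - γ • G) = γ • (G - w) by module, smul_smul,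
      inv_mul_cancel₀ hγ.ne', one_smul]
  rw [hGw, show z - (x - γ • G) = (z - x) + γ • G by abel, inner_add_right, inner_sub_left,
    inner_sub_left, real_inner_smul_right, real_inner_smul_right,
    real_inner_self_eq_norm_sq] at hprox
  rw [show x - γ • G - x = -(γ • G) by abel, inner_neg_right, real_inner_smul_right, norm_neg,
    norm_smul, Real.norm_eq_abs, abs_of_pos hγ, mul_pow] at hdesc
  rw [hG, show x - z = -(z - x) by abel, inner_neg_right, norm_neg]
  -- the `w`-terms cancel; `L γ² ‖G‖² ≤ γ ‖G‖²` absorbs the descent term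
  nlinarith [mul_nonneg hγ.le (sq_nonneg ‖G‖)]

/-- For `γ ∈ (0, 1/L_f]`: `‖G_γ(x)‖² ≥ 2μ_f (F(P_γ(x)) - F_⋆)`. -/
theorem grad_mapping_lower_bound {n : ℕ} (f : Eucl n → ℝ) (f' : Eucl n → Eucl n)
    (g : Eucl n → EReal) (γ μ : ℝ) (p : Eucl n → Eucl n) (Lf : NNReal) (xstar : Eucl n)
    (hμ0 : 0 < μ)
    (hsc : ∀ x y : Eucl n, f x + ⟪f' x, y - x⟫ + μ / 2 * ‖y - x‖ ^ 2 ≤ f y)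
    (hf' : ∀ x, HasGradientAt f (f' x) x)
    (hLip : LipschitzWith Lf f')
    (hg : ProperLscConvex g)
    (hγ : 0 < γ) (hγL : γ ≤ 1 / Lf)
    (hp : IsProx γ g p)
    (hstar : ∀ y, ((f xstar : ℝ) : EReal) + g xstar ≤ ((f y : ℝ) : EReal) + g y)
    (x : Eucl n) :
    ((2 * μ : ℝ) : EReal)
        * ((((f (p (x - γ • f' x)) : ℝ) : EReal) + g (p (x - γ • f' x)))
            - (((f xstar : ℝ) : EReal) + g xstar))
      ≤ ((‖γ⁻¹ • (x - p (x - γ • f' x))‖ ^ 2 : ℝ) : EReal) := by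
  obtain ⟨⟨x₀, hx₀⟩, hg_ne_bot, -, hg_conv⟩ := hg
  set q := p (x - γ • f' x)
  obtain ⟨b, hb⟩ := EReal.exists_coe_of_add_coe_le
    (by rw [add_comm, add_comm (g x₀)]; exact hstar x₀) hx₀ (hg_ne_bot xstar)
  obtain ⟨a, ha⟩ := EReal.exists_coe_of_add_coe_le (hp _ xstar) (by simp [hb]) (hg_ne_bot q)
  have hγLf : γ * Lf ≤ 1 := by
    rcases Lf.coe_nonneg.eq_or_lt with h | h
    · rw [← h, mul_zero]
      exact zero_le_one
    · rwa [le_div_iff₀ h] at hγL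
  have hgap := sub_le_inner_sub_of_proxGrad hγ hγLf (hp.add_inner_le hg_conv ha hb)
    (le_add_inner_add_mul_norm_sq_of_lipschitzWith_gradient hf' hLip x q) (hsc x xstar)
  have hreal : 2 * μ * (f q + a - (f xstar + b)) ≤ ‖γ⁻¹ • (x - q)‖ ^ 2 :=
    calc 2 * μ * (f q + a - (f xstar + b))
        ≤ 2 * μ * (⟪γ⁻¹ • (x - q), x - xstar⟫ - μ / 2 * ‖x - xstar‖ ^ 2) := by gcongr
      _ = 2 * μ * ⟪γ⁻¹ • (x - q), x - xstar⟫ - μ ^ 2 * ‖x - xstar‖ ^ 2 := by ring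
      _ ≤ ‖γ⁻¹ • (x - q)‖ ^ 2 := two_mul_mul_inner_sub_sq_mul_norm_sq_le μ _ _
  rw [ha, hb]
  exact_mod_cast hreal
end
end

section
/- For any x ∈ R^n, any minimizer x_⋆ of F = f + g, and any γ ∈ (0, 1/L_f]: F(P_γ(x)) - F(x_⋆) ≤ (1/(2γ))(1 - γμ_f)‖x - x_⋆‖². -/
open scoped RealInnerProductSpace
open Filter Topology

noncomputable section

/-!
Write `y = x - γ ∇f(x)` and `P = prox_{γg}(y)`. Comparing `P` with `(1 - t) P + t z` in the prox
objective, convexity of `g` and `t → 0` give the variational inequality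
`g P ≤ g z + ⟪P - y, z - P⟫ / γ` for every `z`. Add the descent lemma
`f P ≤ f x + ⟪∇f(x), P - x⟫ + ‖P - x‖² / (2γ)` (as `γ L_f ≤ 1`) and strong convexity
`f x + ⟪∇f(x), z - x⟫ + μ/2 ‖z - x‖² ≤ f z`: expanding `‖z - x‖² = ‖(P - x) + (z - P)‖²`, all
inner products cancel and `F P ≤ F z + (1 - γμ)/(2γ) ‖x - z‖² - ‖z - P‖² / (2γ)` remains.
-/

section

variable {E : Type*} [NormedAddCommGroup E] [InnerProductSpace ℝ E]

theorem descent_lemma [CompleteSpace E] {f : E → ℝ} {f' : E → E} {L : NNReal}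
    (hf' : ∀ x, HasGradientAt f (f' x) x) (hLip : LipschitzWith L f') (x y : E) :
    f y ≤ f x + ⟪f' x, y - x⟫ + L / 2 * ‖y - x‖ ^ 2 := by
  set v := y - x
  -- `ψ` is antitone on `[0, 1]`: `ψ' t = ⟪f' (x + t • v) - f' x, v⟫ - L ‖v‖² t ≤ 0` by Lipschitz.
  set ψ : ℝ → ℝ := fun t => f (x + t • v) - t * ⟪f' x, v⟫ - L * ‖v‖ ^ 2 * t ^ 2 / 2
  have hψ' (t : ℝ) : HasDerivAt ψ (⟪f' (x + t • v) - f' x, v⟫ - L * ‖v‖ ^ 2 * t) t := by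
    have hline : HasDerivAt (fun s : ℝ => x + s • v) v t := by
      simpa using ((hasDerivAt_id t).smul_const v).const_add x
    have hf : HasDerivAt (fun s : ℝ => f (x + s • v)) ⟪f' (x + t • v), v⟫ t := by
      have := (hf' (x + t • v)).hasFDerivAt.comp_hasDerivAt t hline
      simp only [InnerProductSpace.toDual_apply_apply] at this
      exact this
    refine ((hf.sub ((hasDerivAt_id t).mul_const ⟪f' x, v⟫)).sub
      (((hasDerivAt_pow 2 t).const_mul (L * ‖v‖ ^ 2)).div_const 2)).congr_deriv ?_
    simp only [inner_sub_left]
    ring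
  have hψ'_nonpos {t : ℝ} (ht : 0 ≤ t) : ⟪f' (x + t • v) - f' x, v⟫ - L * ‖v‖ ^ 2 * t ≤ 0 := by
    have hdist : ‖f' (x + t • v) - f' x‖ ≤ L * (t * ‖v‖) := by
      simpa [dist_eq_norm, norm_smul, abs_of_nonneg ht] using hLip.dist_le_mul (x + t • v) x
    have := mul_le_mul_of_nonneg_right hdist (norm_nonneg v)
    nlinarith [real_inner_le_norm (f' (x + t • v) - f' x) v]
  have hanti : AntitoneOn ψ (Set.Icc 0 1) :=
    antitoneOn_of_deriv_nonpos (convex_Icc 0 1) (fun t _ => (hψ' t).continuousAt.continuousWithinAt)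
      (fun t _ => (hψ' t).differentiableAt.differentiableWithinAt)
      (fun t ht => (hψ' t).deriv ▸ hψ'_nonpos (interior_subset ht).1)
  have h01 := hanti (Set.left_mem_Icc.2 zero_le_one) (Set.right_mem_Icc.2 zero_le_one) zero_le_one
  simp only [ψ, v, zero_smul, add_zero, one_smul, add_sub_cancel] at h01
  linarith

theorem le_of_forall_le_add_mul {a b d : ℝ} (h : ∀ t, 0 < t → t ≤ 1 → a ≤ b + t * d) :
    a ≤ b := by
  have hlim : Tendsto (fun t => b + t * d) (𝓝[>] 0) (𝓝 b) :=
    ((Continuous.tendsto' (by fun_prop) 0 b (by simp))).mono_left nhdsWithin_le_nhds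
  refine ge_of_tendsto hlim ?_
  filter_upwards [Ioc_mem_nhdsGT zero_lt_one] with t ht using h t ht.1 ht.2

/-- The optimality condition of the proximal step: `(y - P) / γ` is a subgradient of `g` at `P`. -/
theorem le_add_inner_div_of_prox {g : E → EReal} {γ a b : ℝ} {y P z : E} (hγ : 0 < γ)
    (hconv : ∀ x y : E, ∀ a b : ℝ, 0 ≤ a → 0 ≤ b → a + b = 1 →
      g (a • x + b • y) ≤ (a : EReal) * g x + (b : EReal) * g y)
    (hmin : ∀ u, g P + ((‖P - y‖ ^ 2 / (2 * γ) : ℝ) : EReal)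
      ≤ g u + ((‖u - y‖ ^ 2 / (2 * γ) : ℝ) : EReal))
    (ha : g P = a) (hb : g z = b) :
    a ≤ b + ⟪P - y, z - P⟫ / γ := by
  refine le_of_forall_le_add_mul (d := ‖z - P‖ ^ 2 / (2 * γ)) fun t ht0 ht1 => ?_
  have hseg : g ((1 - t) • P + t • z) ≤ (((1 - t) * a + t * b : ℝ) : EReal) := by
    simpa [ha, hb] using hconv P z (1 - t) t (by linarith) ht0.le (by ring)
  have hreal : a + ‖P - y‖ ^ 2 / (2 * γ)
      ≤ (1 - t) * a + t * b + ‖(P - y) + t • (z - P)‖ ^ 2 / (2 * γ) := by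
    have h := (hmin ((1 - t) • P + t • z)).trans (add_le_add hseg le_rfl)
    rwa [ha, ← EReal.coe_add, ← EReal.coe_add, EReal.coe_le_coe_iff,
      show (1 - t) • P + t • z - y = (P - y) + t • (z - P) by module] at h
  rw [norm_add_sq_real, real_inner_smul_right, norm_smul, Real.norm_eq_abs,
    abs_of_pos ht0] at hreal
  refine le_of_mul_le_mul_left ?_ ht0
  field_simp at hreal ⊢
  nlinarith

theorem forward_backward_bound {f : E → ℝ} {f' x P z : E} {L γ μ a b : ℝ} (hγ : 0 < γ)
    (hγL : γ * L ≤ 1)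
    (hdesc : f P ≤ f x + ⟪f', P - x⟫ + L / 2 * ‖P - x‖ ^ 2)
    (hprox : a ≤ b + ⟪P - (x - γ • f'), z - P⟫ / γ)
    (hsc : f x + ⟪f', z - x⟫ + μ / 2 * ‖z - x‖ ^ 2 ≤ f z) :
    f P + a ≤ f z + b + 1 / (2 * γ) * (1 - γ * μ) * ‖x - z‖ ^ 2 := by
  have hsplit : z - x = (P - x) + (z - P) := by abel
  rw [norm_sub_rev, hsplit, norm_add_sq_real]
  rw [hsplit, inner_add_right] at hsc
  rw [sub_sub_eq_add_sub, add_sub_right_comm, inner_add_left, real_inner_smul_left] at hprox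
  rw [norm_add_sq_real] at hsc
  field_simp at hprox ⊢
  nlinarith [sq_nonneg ‖P - x‖, sq_nonneg ‖z - P‖]

end

theorem upper_bound_dist_to_sol_general {n : ℕ} (f : Eucl n → ℝ) (f' : Eucl n → Eucl n)
    (g : Eucl n → EReal) (γ μ : ℝ) (p : Eucl n → Eucl n) (Lf : NNReal) (xstar : Eucl n)
    (hsc : ∀ x y : Eucl n, f x + ⟪f' x, y - x⟫ + μ / 2 * ‖y - x‖ ^ 2 ≤ f y)
    (hf' : ∀ x, HasGradientAt f (f' x) x)
    (hLip : LipschitzWith Lf f')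
    (hg : ProperLscConvex g)
    (hγ : 0 < γ) (hγL : γ ≤ 1 / Lf)
    (hp : IsProx γ g p)
    (x : Eucl n) :
    ((f (p (x - γ • f' x)) : ℝ) : EReal) + g (p (x - γ • f' x))
      ≤ (((f xstar : ℝ) : EReal) + g xstar)
        + ((1 / (2 * γ) * (1 - γ * μ) * ‖x - xstar‖ ^ 2 : ℝ) : EReal) := by
  obtain ⟨-, hbot, -, hconv⟩ := hg
  set y := x - γ • f' x
  rcases eq_or_ne (g xstar) ⊤ with hstar_top | hstar_top
  · rw [hstar_top, EReal.add_top_of_ne_bot (EReal.coe_ne_bot _), EReal.top_add_coe]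
    exact le_top
  have hP_top : g (p y) ≠ ⊤ := fun h => by
    simpa [h, EReal.add_top_of_ne_bot (EReal.coe_ne_bot _)] using
      (hp y xstar).trans_lt (EReal.add_lt_top hstar_top (EReal.coe_ne_top _))
  have hgstar := (EReal.coe_toReal hstar_top (hbot xstar)).symm
  have hgP := (EReal.coe_toReal hP_top (hbot (p y))).symm
  have hγL' : γ * Lf ≤ 1 := by
    rcases Lf.coe_nonneg.eq_or_lt with hL | hL
    · simp [← hL]
    · rwa [le_div_iff₀ hL] at hγL
  have hstep := forward_backward_bound hγ hγL' (descent_lemma hf' hLip x (p y))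
    (le_add_inner_div_of_prox hγ hconv (hp y) hgP hgstar) (hsc x xstar)
  rw [hgP, hgstar]
  exact_mod_cast hstep

/-- For any `x`, minimizer `x_⋆` of `F = f + g`, and `γ ∈ (0, 1/L_f]`:
`F(P_γ(x)) - F(x_⋆) ≤ (1/(2γ))(1 - γ μ_f)‖x - x_⋆‖²`. -/
theorem upper_bound_dist_to_sol {n : ℕ} (f : Eucl n → ℝ) (f' : Eucl n → Eucl n)
    (g : Eucl n → EReal) (γ μ : ℝ) (p : Eucl n → Eucl n) (Lf : NNReal) (xstar : Eucl n)
    (hμ0 : 0 ≤ μ)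
    (hsc : ∀ x y : Eucl n, f x + ⟪f' x, y - x⟫ + μ / 2 * ‖y - x‖ ^ 2 ≤ f y)
    (hf' : ∀ x, HasGradientAt f (f' x) x)
    (hLip : LipschitzWith Lf f')
    (hg : ProperLscConvex g)
    (hγ : 0 < γ) (hγL : γ ≤ 1 / Lf)
    (hp : IsProx γ g p)
    (hstar : ∀ y, ((f xstar : ℝ) : EReal) + g xstar ≤ ((f y : ℝ) : EReal) + g y)
    (x : Eucl n) :
    ((f (p (x - γ • f' x)) : ℝ) : EReal) + g (p (x - γ • f' x))
      ≤ (((f xstar : ℝ) : EReal) + g xstar)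
        + ((1 / (2 * γ) * (1 - γ * μ) * ‖x - xstar‖ ^ 2 : ℝ) : EReal) :=
  upper_bound_dist_to_sol_general f f' g γ μ p Lf xstar hsc hf' hLip hg hγ hγL hp x
end
end

section
/- Every element P of the Clarke generalized Jacobian of prox_{γg} at any point x is a symmetric positive semidefinite matrix with ‖P‖ ≤ 1. -/
open scoped RealInnerProductSpace
open Filter Topology

noncomputable section

/-- B-subdifferential (limiting Jacobian) of a mapping `T` at `x`: limits of Jacobians
along sequences of differentiability points converging to `x`. -/
def Bsubdiff {n : ℕ} (T : Eucl n → Eucl n) (x : Eucl n) : Set (Eucl n →L[ℝ] Eucl n) :=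
  { H | ∃ u : ℕ → Eucl n, (∀ k, DifferentiableAt ℝ T (u k)) ∧
      Tendsto u atTop (𝓝 x) ∧ Tendsto (fun k => fderiv ℝ T (u k)) atTop (𝓝 H) }

/-- Clarke generalized Jacobian: convex hull of the B-subdifferential. -/
def ClarkeJacobian {n : ℕ} (T : Eucl n → Eucl n) (x : Eucl n) : Set (Eucl n →L[ℝ] Eucl n) :=
  convexHull ℝ (Bsubdiff T x)

/-! The prox map is firmly nonexpansive, `‖p x - p y‖² ≤ ⟪p x - p y, x - y⟫`, i.e. `2 p - id` is
1-Lipschitz, so every Jacobian of `p` lies in the closed ball of radius `1/2` about `id / 2`.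
Moreover `p` is the gradient of the conjugate of the convex function `γ g + ‖·‖² / 2`, so its
Jacobians are Hessians, hence self-adjoint. Self-adjoint operators in that ball form a closed
convex set, which therefore contains the Clarke Jacobian, and its elements are positive
semidefinite of norm at most `1`. -/

open Metric

section InnerProductSpace

variable {E : Type*} [NormedAddCommGroup E] [InnerProductSpace ℝ E]

def FirmlyNonexpansive (T : E → E) : Prop :=
  ∀ x y, ‖T x - T y‖ ^ 2 ≤ ⟪T x - T y, x - y⟫

namespace FirmlyNonexpansive

variable {T : E → E}

theorem lipschitzWith_two_smul_sub (hT : FirmlyNonexpansive T) :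
    LipschitzWith 1 fun x => (2 : ℝ) • T x - x := by
  refine LipschitzWith.mk_one fun x y => ?_
  rw [dist_eq_norm, dist_eq_norm, ← sq_le_sq₀ (norm_nonneg _) (norm_nonneg _)]
  have hexpand : (2 : ℝ) • T x - x - ((2 : ℝ) • T y - y) = (2 : ℝ) • (T x - T y) - (x - y) := by
    module
  rw [hexpand, norm_sub_sq_real, norm_smul, real_inner_smul_left, Real.norm_two]
  nlinarith [hT x y]

theorem continuous (hT : FirmlyNonexpansive T) : Continuous T := by
  have hT_eq : T = fun x => (2⁻¹ : ℝ) • (((2 : ℝ) • T x - x) + x) := by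
    funext x
    module
  rw [hT_eq]
  exact (hT.lipschitzWith_two_smul_sub.continuous.add continuous_id).const_smul _

theorem fderiv_mem_closedBall (hT : FirmlyNonexpansive T) {u : E} (hd : DifferentiableAt ℝ T u) :
    fderiv ℝ T u ∈ closedBall ((2⁻¹ : ℝ) • ContinuousLinearMap.id ℝ E) 2⁻¹ := by
  have hR : ‖(2 : ℝ) • fderiv ℝ T u - ContinuousLinearMap.id ℝ E‖ ≤ 1 := by
    simpa using ((hd.hasFDerivAt.const_smul (2 : ℝ)).sub (hasFDerivAt_id u)).le_of_lipschitz
      hT.lipschitzWith_two_smul_sub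
  have hhalf : fderiv ℝ T u - (2⁻¹ : ℝ) • ContinuousLinearMap.id ℝ E =
      (2⁻¹ : ℝ) • ((2 : ℝ) • fderiv ℝ T u - ContinuousLinearMap.id ℝ E) := by
    module
  rw [mem_closedBall, dist_eq_norm, hhalf, norm_smul]
  norm_num
  linarith

end FirmlyNonexpansive

namespace ContinuousLinearMap

variable {Q : E →L[ℝ] E}

theorem norm_le_one_of_mem_closedBall_half_id
    (hQ : Q ∈ closedBall ((2⁻¹ : ℝ) • ContinuousLinearMap.id ℝ E) 2⁻¹) : ‖Q‖ ≤ 1 := by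
  rw [mem_closedBall, dist_eq_norm] at hQ
  calc ‖Q‖ ≤ ‖(2⁻¹ : ℝ) • ContinuousLinearMap.id ℝ E‖ +
        ‖Q - (2⁻¹ : ℝ) • ContinuousLinearMap.id ℝ E‖ := norm_le_norm_add_norm_sub' _ _
    _ ≤ 2⁻¹ * 1 + 2⁻¹ := by grw [norm_smul, norm_id_le, hQ]; norm_num
    _ = 1 := by norm_num

theorem inner_apply_self_nonneg_of_mem_closedBall_half_id
    (hQ : Q ∈ closedBall ((2⁻¹ : ℝ) • ContinuousLinearMap.id ℝ E) 2⁻¹) (u : E) :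
    0 ≤ ⟪Q u, u⟫ := by
  rw [mem_closedBall, dist_eq_norm] at hQ
  set A := Q - (2⁻¹ : ℝ) • ContinuousLinearMap.id ℝ E
  have hsplit : ⟪Q u, u⟫ = ⟪A u, u⟫ + 2⁻¹ * ‖u‖ ^ 2 := by
    simp [A, inner_sub_left, real_inner_smul_left]
  have hdev : |⟪A u, u⟫| ≤ 2⁻¹ * ‖u‖ ^ 2 :=
    calc |⟪A u, u⟫| ≤ ‖A u‖ * ‖u‖ := abs_real_inner_le_norm _ _
      _ ≤ 2⁻¹ * ‖u‖ * ‖u‖ := by grw [le_opNorm_of_le _ le_rfl, hQ]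
      _ = 2⁻¹ * ‖u‖ ^ 2 := by ring
  linarith [neg_abs_le ⟪A u, u⟫]

end ContinuousLinearMap

theorem hasGradientAt_of_subgradient_of_continuousAt [CompleteSpace E] {f : E → ℝ} {G : E → E}
    (hG : ∀ x y, f x + ⟪G x, y - x⟫ ≤ f y) {x : E} (hc : ContinuousAt G x) :
    HasGradientAt f (G x) x := by
  rw [hasGradientAt_iff_isLittleO]
  have hbound : ∀ y, |f y - f x - ⟪G x, y - x⟫| ≤ ‖G y - G x‖ * ‖y - x‖ := fun y => by
    have hmono : ⟪G y - G x, y - x⟫ = -⟪G y, x - y⟫ - ⟪G x, y - x⟫ := by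
      rw [inner_sub_left, ← inner_neg_right, neg_sub]
    rw [abs_le]
    constructor <;> linarith [hG x y, hG y x, real_inner_le_norm (G y - G x) (y - x),
      mul_nonneg (norm_nonneg (G y - G x)) (norm_nonneg (y - x))]
  have hsmall : (fun y => ‖G y - G x‖ * ‖y - x‖) =o[𝓝 x] fun y => y - x := by
    have h0 : (fun y => ‖G y - G x‖) =o[𝓝 x] fun _ => (1 : ℝ) := by
      rw [Asymptotics.isLittleO_one_iff]
      simpa using ((hc.sub (continuousAt_const (y := G x))).norm).tendsto
    simpa using h0.mul_isBigO (Asymptotics.isBigO_refl (fun y => ‖y - x‖) (𝓝 x))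
  exact (Asymptotics.IsBigO.of_bound' (Eventually.of_forall fun y =>
    (hbound y).trans (Real.le_norm_self _))).trans_isLittleO hsmall

theorem isSelfAdjoint_fderiv_of_hasGradientAt [CompleteSpace E] {f : E → ℝ} {G : E → E}
    (hf : ∀ z, HasGradientAt f (G z) z) {u : E} (hG : DifferentiableAt ℝ G u) :
    IsSelfAdjoint (fderiv ℝ G u) := by
  have hf' : ∀ z, HasFDerivAt f (innerSL ℝ (G z)) z := hf
  have hsymm := second_derivative_symmetric hf'
    ((innerSL ℝ (E := E)).hasFDerivAt.comp u hG.hasFDerivAt)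
  refine ContinuousLinearMap.isSelfAdjoint_iff_isSymmetric.mpr fun v w => ?_
  exact (hsymm v w).trans (real_inner_comm _ _)

theorem isClosed_setOf_isSelfAdjoint [CompleteSpace E] :
    IsClosed {Q : E →L[ℝ] E | IsSelfAdjoint Q} := by
  simp only [IsSelfAdjoint, ContinuousLinearMap.star_eq_adjoint]
  exact isClosed_eq ContinuousLinearMap.adjoint.continuous continuous_id

end InnerProductSpace

theorem clarkeJacobian_subset {n : ℕ} {T : Eucl n → Eucl n} {S : Set (Eucl n →L[ℝ] Eucl n)}
    (hS : IsClosed S) (hSc : Convex ℝ S) (hT : ∀ u, DifferentiableAt ℝ T u → fderiv ℝ T u ∈ S)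
    (x : Eucl n) : ClarkeJacobian T x ⊆ S :=
  convexHull_min (fun _ ⟨_, hu, _, hlim⟩ =>
    hS.mem_of_tendsto hlim (Eventually.of_forall fun k => hT _ (hu k))) hSc

theorem ProperLscConvex.apply_le_coe {n : ℕ} {g : Eucl n → EReal} (hg : ProperLscConvex g)
    {x y : Eucl n} (hx : g x ≠ ⊤) (hy : g y ≠ ⊤) {a b : ℝ} (ha : 0 ≤ a) (hb : 0 ≤ b)
    (hab : a + b = 1) :
    g (a • x + b • y) ≤ ((a * (g x).toReal + b * (g y).toReal : ℝ) : EReal) := by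
  have h := hg.2.2.2 x y a b ha hb hab
  rwa [← EReal.coe_toReal hx (hg.2.1 x), ← EReal.coe_toReal hy (hg.2.1 y), ← EReal.coe_mul,
    ← EReal.coe_mul, ← EReal.coe_add] at h

/-- The convex conjugate of `γ g + ‖·‖² / 2`: the supremum defining it is attained at `p x`. -/
def proxPotential {n : ℕ} (γ : ℝ) (g : Eucl n → EReal) (p : Eucl n → Eucl n) (x : Eucl n) : ℝ :=
  ⟪p x, x⟫ - γ * (g (p x)).toReal - ‖p x‖ ^ 2 / 2

namespace IsProx

variable {n : ℕ} {g : Eucl n → EReal} {γ : ℝ} {p : Eucl n → Eucl n}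

theorem apply_ne_top_s10 (hg : ProperLscConvex g) (hp : IsProx γ g p) (x : Eucl n) :
    g (p x) ≠ ⊤ := by
  obtain ⟨x₀, hx₀⟩ := hg.1
  intro htop
  have h := hp x x₀
  rw [htop, EReal.top_add_of_ne_bot (EReal.coe_ne_bot _),
    ← EReal.coe_toReal hx₀ (hg.2.1 x₀), ← EReal.coe_add] at h
  exact EReal.coe_ne_top _ (top_le_iff.mp h)

theorem toReal_le (hg : ProperLscConvex g) (hp : IsProx γ g p) (x : Eucl n) {u : Eucl n}
    (hu : g u ≠ ⊤) :
    (g (p x)).toReal + ‖p x - x‖ ^ 2 / (2 * γ) ≤ (g u).toReal + ‖u - x‖ ^ 2 / (2 * γ) := by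
  have h := hp x u
  rw [← EReal.coe_toReal (hp.apply_ne_top_s10 hg x) (hg.2.1 _), ← EReal.coe_toReal hu (hg.2.1 u),
    ← EReal.coe_add, ← EReal.coe_add] at h
  exact_mod_cast h

-- Compare `p x` with the point `p x + t • (u - p x)` of the segment, using convexity of `g`.
theorem toReal_add_inner_div_le_add_mul (hg : ProperLscConvex g) (hγ : 0 < γ)
    (hp : IsProx γ g p) (x : Eucl n) {u : Eucl n} (hu : g u ≠ ⊤) {t : ℝ} (ht : t ∈ Set.Ioc 0 1) :
    (g (p x)).toReal + ⟪x - p x, u - p x⟫ / γ ≤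
      (g u).toReal + t * (‖u - p x‖ ^ 2 / (2 * γ)) := by
  obtain ⟨ht0, ht1⟩ := ht
  have hconv := hg.apply_le_coe (hp.apply_ne_top_s10 hg x) hu (sub_nonneg.mpr ht1) ht0.le
    (sub_add_cancel 1 t)
  have hseg : (1 - t) • p x + t • u = p x + t • (u - p x) := by module
  rw [hseg] at hconv
  have hfin : g (p x + t • (u - p x)) ≠ ⊤ := ne_top_of_le_ne_top (EReal.coe_ne_top _) hconv
  have hconv_real := EReal.toReal_le_toReal hconv (hg.2.1 _) (EReal.coe_ne_top _)
  rw [EReal.toReal_coe] at hconv_real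
  have hmin := hp.toReal_le hg x hfin
  have hnorm : ‖p x + t • (u - p x) - x‖ ^ 2 =
      ‖p x - x‖ ^ 2 - 2 * t * ⟪x - p x, u - p x⟫ + t ^ 2 * ‖u - p x‖ ^ 2 := by
    rw [show p x + t • (u - p x) - x = t • (u - p x) - (x - p x) by abel, norm_sub_sq_real,
      norm_smul, real_inner_smul_left, Real.norm_eq_abs, mul_pow, sq_abs, norm_sub_rev x,
      real_inner_comm (x - p x)]
    ring
  rw [hnorm] at hmin
  have hscaled : t * ((g (p x)).toReal + ⟪x - p x, u - p x⟫ / γ) ≤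
      t * ((g u).toReal + t * (‖u - p x‖ ^ 2 / (2 * γ))) := by
    have hexpand : (‖p x - x‖ ^ 2 - 2 * t * ⟪x - p x, u - p x⟫ + t ^ 2 * ‖u - p x‖ ^ 2) / (2 * γ) =
        ‖p x - x‖ ^ 2 / (2 * γ) - t * (⟪x - p x, u - p x⟫ / γ) +
          t * (t * (‖u - p x‖ ^ 2 / (2 * γ))) := by
      field_simp
    rw [hexpand] at hmin
    linarith
  exact le_of_mul_le_mul_left hscaled ht0

-- `(x - p x) / γ` is a subgradient of `g` at `p x`.
theorem toReal_add_inner_div_le (hg : ProperLscConvex g) (hγ : 0 < γ) (hp : IsProx γ g p)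
    (x : Eucl n) {u : Eucl n} (hu : g u ≠ ⊤) :
    (g (p x)).toReal + ⟪x - p x, u - p x⟫ / γ ≤ (g u).toReal := by
  have hlim : Tendsto (fun t : ℝ => (g u).toReal + t * (‖u - p x‖ ^ 2 / (2 * γ))) (𝓝[>] 0)
      (𝓝 (g u).toReal) := by
    have h := (continuous_const.add (continuous_id.mul continuous_const)).tendsto 0
      (f := fun t : ℝ => (g u).toReal + t * (‖u - p x‖ ^ 2 / (2 * γ)))
    simpa using h.mono_left nhdsWithin_le_nhds
  refine ge_of_tendsto hlim ?_
  filter_upwards [Ioc_mem_nhdsGT (zero_lt_one' ℝ)] with t ht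
  exact hp.toReal_add_inner_div_le_add_mul hg hγ x hu ht

theorem firmlyNonexpansive (hg : ProperLscConvex g) (hγ : 0 < γ) (hp : IsProx γ g p) :
    FirmlyNonexpansive p := fun x y => by
  have hxy := hp.toReal_add_inner_div_le hg hγ x (hp.apply_ne_top_s10 hg y)
  have hyx := hp.toReal_add_inner_div_le hg hγ y (hp.apply_ne_top_s10 hg x)
  have hsum : ⟪x - p x, p y - p x⟫ + ⟪y - p y, p x - p y⟫ ≤ 0 := by
    have h : (⟪x - p x, p y - p x⟫ + ⟪y - p y, p x - p y⟫) / γ ≤ 0 := by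
      rw [add_div]; linarith
    simpa using (div_le_iff₀ hγ).mp h
  have hexpand : ⟪x - p x, p y - p x⟫ + ⟪y - p y, p x - p y⟫ =
      ‖p x - p y‖ ^ 2 - ⟪p x - p y, x - y⟫ := by
    rw [← real_inner_self_eq_norm_sq]
    simp only [inner_sub_left, inner_sub_right, real_inner_comm]
    ring
  linarith

theorem proxPotential_add_inner_le (hg : ProperLscConvex g) (hγ : 0 < γ) (hp : IsProx γ g p)
    (x y : Eucl n) :
    proxPotential γ g p x + ⟪p x, y - x⟫ ≤ proxPotential γ g p y := by
  have h := hp.toReal_le hg y (hp.apply_ne_top_s10 hg x)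
  rw [norm_sub_sq_real, norm_sub_sq_real] at h
  have h' := mul_le_mul_of_nonneg_left h hγ.le
  unfold proxPotential
  field_simp at h'
  rw [inner_sub_right]
  linarith [real_inner_comm (p x) y, real_inner_comm (p y) y]

theorem hasGradientAt_proxPotential (hg : ProperLscConvex g) (hγ : 0 < γ) (hp : IsProx γ g p)
    (x : Eucl n) : HasGradientAt (proxPotential γ g p) (p x) x :=
  hasGradientAt_of_subgradient_of_continuousAt (hp.proxPotential_add_inner_le hg hγ)
    (hp.firmlyNonexpansive hg hγ).continuous.continuousAt

theorem isSelfAdjoint_fderiv (hg : ProperLscConvex g) (hγ : 0 < γ) (hp : IsProx γ g p)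
    {u : Eucl n} (hd : DifferentiableAt ℝ p u) : IsSelfAdjoint (fderiv ℝ p u) :=
  isSelfAdjoint_fderiv_of_hasGradientAt (hp.hasGradientAt_proxPotential hg hγ) hd

end IsProx

/-- Every element of the Clarke generalized Jacobian of `prox_{γg}` at any point is a
symmetric positive semidefinite matrix of norm at most `1`. -/
theorem clarke_jacobian_prox_psd {n : ℕ} (g : Eucl n → EReal) (γ : ℝ) (p : Eucl n → Eucl n)
    (hg : ProperLscConvex g) (hγ : 0 < γ) (hp : IsProx γ g p) (x : Eucl n) :
    ∀ P ∈ ClarkeJacobian p x,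
      (∀ u v : Eucl n, ⟪P u, v⟫ = ⟪u, P v⟫) ∧
      (∀ u : Eucl n, 0 ≤ ⟪P u, u⟫) ∧
      ‖P‖ ≤ 1 := by
  intro P hP
  have hclosed : IsClosed ({Q | IsSelfAdjoint Q} ∩
      closedBall ((2⁻¹ : ℝ) • ContinuousLinearMap.id ℝ (Eucl n)) 2⁻¹) :=
    isClosed_setOf_isSelfAdjoint.inter isClosed_closedBall
  have hconvex : Convex ℝ ({Q | IsSelfAdjoint Q} ∩
      closedBall ((2⁻¹ : ℝ) • ContinuousLinearMap.id ℝ (Eucl n)) 2⁻¹) :=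
    (selfAdjoint.submodule ℝ (Eucl n →L[ℝ] Eucl n)).convex.inter (convex_closedBall _ _)
  obtain ⟨hsymm, hball⟩ := clarkeJacobian_subset hclosed hconvex
    (fun _ hd => ⟨hp.isSelfAdjoint_fderiv hg hγ hd,
      (hp.firmlyNonexpansive hg hγ).fderiv_mem_closedBall hd⟩) x hP
  exact ⟨hsymm.isSymmetric, P.inner_apply_self_nonneg_of_mem_closedBall_half_id hball,
    P.norm_le_one_of_mem_closedBall_half_id hball⟩
end
end

section
/- For g(x) = ‖x‖₂ on R^n, the proximal mapping is prox_{γg}(x) = (1 - γ/‖x‖₂)x if ‖x‖₂ ≥ γ and 0 otherwise, and its B-subdifferential equals {I - (γ/‖x‖₂)(I - ww')} with w = x/‖x‖₂ when ‖x‖₂ > γ, equals {0} when ‖x‖₂ < γ, and equals the pair of both matrices when ‖x‖₂ = γ. -/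
open scoped RealInnerProductSpace
open Filter Topology

noncomputable section

/-- The outer product `w w'`, acting as `v ↦ ⟪w, v⟫ w`. -/
def outerProd {n : ℕ} (w : Eucl n) : Eucl n →L[ℝ] Eucl n :=
  (innerSL ℝ w).smulRight w

/-! Writing `v` for the block soft thresholding of `x`, one has `x - v = γ s` with `s` a
subgradient of `‖·‖` at `v` (`s = x/‖x‖`, resp. `s = x/γ`); since the prox objective is
`1/γ`-strongly convex, this certifies `v` as its unique minimiser. Off the sphere `‖x‖ = γ` the map
is smooth with a Jacobian that is continuous in `x` (the explicit one outside, `0` inside), so the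
B-subdifferential is a singleton. On the sphere, along the ray through `x` the map behaves like
`t ↦ max t 0 • x`, so it is not differentiable there; limits of Jacobians therefore come from the
two sides only, and radial sequences from either side realise both. -/

section BlockSoftThreshold

variable {E : Type*} [NormedAddCommGroup E] [InnerProductSpace ℝ E]

def blockSoftThreshold (γ : ℝ) (x : E) : E :=
  if γ ≤ ‖x‖ then (1 - γ / ‖x‖) • x else 0

def blockSoftThresholdJacobian (γ : ℝ) (x : E) : E →L[ℝ] E :=
  1 - (γ / ‖x‖) • (1 - (innerSL ℝ (‖x‖⁻¹ • x)).smulRight (‖x‖⁻¹ • x))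

-- `s ∈ ∂‖·‖(v)` and `x - v = γ s` is the prox optimality condition; this is its strongly
-- convex form.
theorem add_norm_sub_sq_le_of_subgradient {γ : ℝ} (hγ : 0 ≤ γ) {x v s : E} (hs : ‖s‖ ≤ 1)
    (hsv : ⟪s, v⟫ = ‖v‖) (hxv : x - v = γ • s) (u : E) :
    2 * γ * ‖v‖ + ‖v - x‖ ^ 2 + ‖u - v‖ ^ 2 ≤ 2 * γ * ‖u‖ + ‖u - x‖ ^ 2 := by
  have hsu : ⟪s, u⟫ ≤ ‖u‖ :=
    (real_inner_le_norm s u).trans (mul_le_of_le_one_left (norm_nonneg u) hs)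
  have hexpand : ‖u - x‖ ^ 2 = ‖u - v‖ ^ 2 - 2 * γ * (⟪s, u⟫ - ‖v‖) + ‖v - x‖ ^ 2 := by
    rw [show u - x = (u - v) - γ • s by rw [← hxv]; abel, norm_sub_sq_real, real_inner_smul_right,
      ← hxv, norm_sub_rev x, real_inner_comm, inner_sub_right, hsv]
    ring
  nlinarith

theorem exists_subgradient_blockSoftThreshold {γ : ℝ} (hγ : 0 < γ) (x : E) :
    ∃ s : E, ‖s‖ ≤ 1 ∧ ⟪s, blockSoftThreshold γ x⟫ = ‖blockSoftThreshold γ x‖ ∧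
      x - blockSoftThreshold γ x = γ • s := by
  by_cases h : γ ≤ ‖x‖
  · have hx : 0 < ‖x‖ := hγ.trans_le h
    have hcoef : 0 ≤ 1 - γ / ‖x‖ := sub_nonneg.mpr ((div_le_one hx).mpr h)
    rw [blockSoftThreshold, if_pos h]
    refine ⟨‖x‖⁻¹ • x, ?_, ?_, ?_⟩
    · rw [norm_smul, norm_inv, norm_norm, inv_mul_cancel₀ hx.ne']
    · rw [real_inner_smul_left, real_inner_smul_right, real_inner_self_eq_norm_sq, norm_smul,
        Real.norm_of_nonneg hcoef]
      field_simp
    · rw [smul_smul, ← div_eq_mul_inv]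
      module
  · rw [not_le] at h
    rw [blockSoftThreshold, if_neg h.not_ge]
    refine ⟨γ⁻¹ • x, ?_, ?_, ?_⟩
    · rw [norm_smul, norm_inv, Real.norm_of_nonneg hγ.le, inv_mul_le_iff₀ hγ, mul_one]
      exact h.le
    · simp
    · rw [sub_zero, smul_smul, mul_inv_cancel₀ hγ.ne', one_smul]

theorem hasFDerivAt_norm_of_ne_zero {x : E} (hx : x ≠ 0) :
    HasFDerivAt (‖·‖) (innerSL ℝ (‖x‖⁻¹ • x)) x := by
  have hsqrt := (hasStrictFDerivAt_norm_sq x).hasFDerivAt.sqrt (by positivity)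
  simp only [Real.sqrt_sq (norm_nonneg _)] at hsqrt
  refine hsqrt.congr_fderiv ?_
  ext v
  simp only [one_div, mul_inv_rev, smul_apply, coe_innerSL_apply, nsmul_eq_mul, Nat.cast_ofNat,
    smul_eq_mul, map_smul]
  field_simp

theorem hasFDerivAt_blockSoftThreshold {γ : ℝ} (hγ : 0 ≤ γ) {x : E} (hx : γ < ‖x‖) :
    HasFDerivAt (blockSoftThreshold γ) (blockSoftThresholdJacobian γ x) x := by
  have hx₀ : x ≠ 0 := norm_pos_iff.mp (hγ.trans_lt hx)
  have hinv : HasFDerivAt (fun y : E => ‖y‖⁻¹) (-(‖x‖ ^ 2)⁻¹ • innerSL ℝ (‖x‖⁻¹ • x)) x :=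
    (hasDerivAt_inv (norm_ne_zero_iff.mpr hx₀)).comp_hasFDerivAt x (hasFDerivAt_norm_of_ne_zero hx₀)
  have hlocal : (fun y : E => y - γ • (‖y‖⁻¹ • y)) =ᶠ[𝓝 x] blockSoftThreshold γ := by
    filter_upwards [continuousAt_const.eventually_lt continuous_norm.continuousAt hx] with y hy
    rw [blockSoftThreshold, if_pos (le_of_lt hy), sub_smul, one_smul, div_eq_mul_inv, mul_smul]
  have hshrink := (hasFDerivAt_id x).sub ((hinv.smul (hasFDerivAt_id x)).const_smul γ)
  refine (hshrink.congr_of_eventuallyEq hlocal.symm).congr_fderiv ?_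
  ext v
  simp only [blockSoftThresholdJacobian, map_smul, neg_smul, id_eq, smul_add, sub_apply,
    ContinuousLinearMap.id_apply, add_apply, smul_apply, ContinuousLinearMap.smulRight_apply,
    neg_apply, coe_innerSL_apply, smul_eq_mul, smul_neg, one_apply_eq_self, sub_right_inj]
  match_scalars <;> field_simp

theorem continuousAt_blockSoftThresholdJacobian (γ : ℝ) {x : E} (hx : x ≠ 0) :
    ContinuousAt (blockSoftThresholdJacobian γ) x := by
  have hnorm : ‖x‖ ≠ 0 := norm_ne_zero_iff.mpr hx
  have hdir : ContinuousAt (fun y : E => ‖y‖⁻¹ • y) x :=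
    (continuous_norm.continuousAt.inv₀ hnorm).smul continuousAt_id
  have hproj : Continuous fun w : E => (innerSL ℝ w).smulRight w :=
    ((ContinuousLinearMap.smulRightL ℝ E E).continuous.comp (innerSL ℝ).continuous).clm_apply
      continuous_id
  exact continuousAt_const.sub ((continuousAt_const.div continuous_norm.continuousAt hnorm).smul
    (continuousAt_const.sub (hproj.continuousAt.comp hdir)))

theorem hasFDerivAt_blockSoftThreshold_of_norm_lt {γ : ℝ} {x : E} (hx : ‖x‖ < γ) :
    HasFDerivAt (blockSoftThreshold γ) (0 : E →L[ℝ] E) x := by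
  refine (hasFDerivAt_const (0 : E) x).congr_of_eventuallyEq ?_
  filter_upwards [continuous_norm.continuousAt.eventually_lt continuousAt_const hx] with y hy
  rw [blockSoftThreshold, if_neg hy.not_ge]

theorem blockSoftThreshold_smul_of_norm_eq {γ : ℝ} (hγ : 0 < γ) {x : E} (hx : ‖x‖ = γ) {c : ℝ}
    (hc : 0 < c) : blockSoftThreshold γ (c • x) = max (c - 1) 0 • x := by
  have hnorm : ‖c • x‖ = c * γ := by rw [norm_smul, Real.norm_of_nonneg hc.le, hx]
  rw [blockSoftThreshold, hnorm]
  rcases le_or_gt 1 c with h | h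
  · rw [if_pos (by nlinarith), max_eq_left (by linarith), smul_smul]
    congr 1
    field_simp
  · rw [if_neg (by nlinarith), max_eq_right (by linarith), zero_smul]

theorem not_differentiableAt_blockSoftThreshold {γ : ℝ} (hγ : 0 < γ) {x : E} (hx : ‖x‖ = γ) :
    ¬ DifferentiableAt ℝ (blockSoftThreshold γ) x := by
  intro h
  have hx₀ : ‖x‖ ^ 2 ≠ 0 := pow_ne_zero 2 (hx ▸ hγ.ne')
  have hline : DifferentiableAt ℝ (fun t : ℝ => blockSoftThreshold γ ((1 + t) • x)) 0 :=
    (by simpa using h : DifferentiableAt ℝ (blockSoftThreshold γ) ((1 + 0 : ℝ) • x)).comp (0 : ℝ)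
      (((differentiableAt_const 1).add differentiableAt_id).smul_const x)
  have hramp : DifferentiableAt ℝ (fun t : ℝ => max t 0 • x) 0 := by
    refine hline.congr_of_eventuallyEq ?_
    filter_upwards [Ioi_mem_nhds (show (-1 : ℝ) < 0 by norm_num)] with t ht
    rw [blockSoftThreshold_smul_of_norm_eq hγ hx (by linarith [Set.mem_Ioi.mp ht]),
      add_sub_cancel_left]
  have habs : DifferentiableAt ℝ (fun t : ℝ => 2 * (⟪x, max t 0 • x⟫ / ‖x‖ ^ 2) - t) 0 :=
    (((differentiableAt_const x).inner ℝ hramp).div_const _ |>.const_mul 2).sub differentiableAt_id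
  refine not_differentiableAt_abs_zero
    (habs.congr_of_eventuallyEq (Eventually.of_forall fun t => ?_))
  dsimp only
  rw [real_inner_smul_right, real_inner_self_eq_norm_sq, mul_div_cancel_right₀ _ hx₀]
  rcases le_total 0 t with ht | ht
  · rw [abs_of_nonneg ht, max_eq_left ht]; ring
  · rw [abs_of_nonpos ht, max_eq_right ht]; ring

theorem fderiv_blockSoftThreshold_eq_or {γ : ℝ} (hγ : 0 < γ) {x : E}
    (hx : DifferentiableAt ℝ (blockSoftThreshold γ) x) :
    fderiv ℝ (blockSoftThreshold γ) x = blockSoftThresholdJacobian γ x ∨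
      fderiv ℝ (blockSoftThreshold γ) x = 0 := by
  rcases lt_trichotomy ‖x‖ γ with h | h | h
  · exact .inr (hasFDerivAt_blockSoftThreshold_of_norm_lt h).fderiv
  · exact absurd hx (not_differentiableAt_blockSoftThreshold hγ h)
  · exact .inl (hasFDerivAt_blockSoftThreshold hγ.le h).fderiv

end BlockSoftThreshold

theorem IsProx.eq_blockSoftThreshold {n : ℕ} {γ : ℝ} (hγ : 0 < γ) {p : Eucl n → Eucl n}
    (hp : IsProx γ (fun x : Eucl n => ((‖x‖ : ℝ) : EReal)) p) : p = blockSoftThreshold γ := by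
  funext x
  set v := blockSoftThreshold γ x
  have hpx := hp x v
  simp only [← EReal.coe_add, EReal.coe_le_coe_iff] at hpx
  obtain ⟨s, hs, hsv, hxv⟩ := exists_subgradient_blockSoftThreshold hγ x
  have hv := add_norm_sub_sq_le_of_subgradient hγ.le hs hsv hxv (p x)
  have h2γ : 0 < 2 * γ := by positivity
  have hpv : ‖p x - v‖ ^ 2 ≤ 0 := by
    have e₁ := mul_div_cancel₀ (‖p x - x‖ ^ 2) h2γ.ne'
    have e₂ := mul_div_cancel₀ (‖v - x‖ ^ 2) h2γ.ne'
    nlinarith [mul_le_mul_of_nonneg_left hpx h2γ.le]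
  simpa [sub_eq_zero] using hpv

section Bsubdiff

variable {n : ℕ} {T : Eucl n → Eucl n} {x : Eucl n}

theorem Bsubdiff_subset_pair {D₁ D₂ : Eucl n → Eucl n →L[ℝ] Eucl n}
    (hT : ∀ᶠ y in 𝓝 x, DifferentiableAt ℝ T y → fderiv ℝ T y = D₁ y ∨ fderiv ℝ T y = D₂ y)
    (h₁ : ContinuousAt D₁ x) (h₂ : ContinuousAt D₂ x) : Bsubdiff T x ⊆ {D₁ x, D₂ x} := by
  rintro H ⟨u, hdiff, hu, hH⟩
  have hcases : ∀ᶠ k in atTop, fderiv ℝ T (u k) = D₁ (u k) ∨ fderiv ℝ T (u k) = D₂ (u k) :=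
    (hu.eventually hT).mono fun k hk => hk (hdiff k)
  by_cases hfreq : ∃ᶠ k in atTop, fderiv ℝ T (u k) = D₁ (u k)
  · exact .inl (tendsto_nhds_unique_of_frequently_eq hH (h₁.tendsto.comp hu) hfreq)
  · refine .inr (tendsto_nhds_unique_of_frequently_eq hH (h₂.tendsto.comp hu) ?_)
    exact ((not_frequently.mp hfreq).and hcases).mono (fun k hk => hk.2.resolve_left hk.1)
      |>.frequently

theorem mem_Bsubdiff_of_tendsto {D : Eucl n → Eucl n →L[ℝ] Eucl n} {u : ℕ → Eucl n}
    (hu : Tendsto u atTop (𝓝 x)) (hT : ∀ k, HasFDerivAt T (D (u k)) (u k))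
    (hD : ContinuousAt D x) : D x ∈ Bsubdiff T x :=
  ⟨u, fun k => (hT k).differentiableAt, hu,
    (hD.tendsto.comp hu).congr fun k => ((hT k).fderiv).symm⟩

theorem Bsubdiff_eq_singleton {D : Eucl n → Eucl n →L[ℝ] Eucl n}
    (hT : ∀ᶠ y in 𝓝 x, HasFDerivAt T (D y) y) (hD : ContinuousAt D x) :
    Bsubdiff T x = {D x} := by
  refine subset_antisymm ?_ (Set.singleton_subset_iff.mpr ?_)
  · simpa using Bsubdiff_subset_pair (hT.mono fun y hy _ => .inl hy.fderiv) hD hD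
  · exact mem_Bsubdiff_of_tendsto tendsto_const_nhds (fun _ => hT.self_of_nhds) hD

end Bsubdiff

section BsubdiffBlockSoftThreshold

variable {n : ℕ} {γ : ℝ} {x : Eucl n}

theorem Bsubdiff_blockSoftThreshold_of_lt_norm (hγ : 0 ≤ γ) (hx : γ < ‖x‖) :
    Bsubdiff (blockSoftThreshold γ) x = {blockSoftThresholdJacobian γ x} :=
  Bsubdiff_eq_singleton
    ((continuousAt_const.eventually_lt continuous_norm.continuousAt hx).mono fun _ hy =>
      hasFDerivAt_blockSoftThreshold hγ hy)
    (continuousAt_blockSoftThresholdJacobian γ (norm_pos_iff.mp (hγ.trans_lt hx)))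

theorem Bsubdiff_blockSoftThreshold_of_norm_lt (hx : ‖x‖ < γ) :
    Bsubdiff (blockSoftThreshold γ) x = {0} :=
  Bsubdiff_eq_singleton (D := fun _ => 0)
    ((continuous_norm.continuousAt.eventually_lt continuousAt_const hx).mono fun _ hy =>
      hasFDerivAt_blockSoftThreshold_of_norm_lt hy)
    continuousAt_const

theorem Bsubdiff_blockSoftThreshold_of_norm_eq (hγ : 0 < γ) (hx : ‖x‖ = γ) :
    Bsubdiff (blockSoftThreshold γ) x = {blockSoftThresholdJacobian γ x, 0} := by
  have hx₀ : x ≠ 0 := norm_pos_iff.mp (hx ▸ hγ)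
  refine subset_antisymm (Bsubdiff_subset_pair (D₂ := fun _ => 0)
    (Eventually.of_forall fun _ => fderiv_blockSoftThreshold_eq_or hγ)
    (continuousAt_blockSoftThresholdJacobian γ hx₀) continuousAt_const) ?_
  set ε : ℕ → ℝ := fun k => 1 / ((k : ℝ) + 2)
  have hε : ∀ k, 0 < ε k ∧ ε k < 1 := fun k => by
    constructor
    · positivity
    · rw [div_lt_one (by positivity)]; linarith [(k.cast_nonneg : (0 : ℝ) ≤ k)]
  have hε₀ : Tendsto ε atTop (𝓝 0) :=
    tendsto_one_div_add_atTop_nhds_zero_nat.comp (tendsto_add_atTop_nat 1) |>.congr fun k => by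
      simp [ε, add_assoc, one_add_one_eq_two]
  have hnorm : ∀ {c : ℝ}, 0 < c → ‖c • x‖ = c * γ := fun hc => by
    rw [norm_smul, Real.norm_of_nonneg hc.le, hx]
  rintro H (rfl | rfl)
  · refine mem_Bsubdiff_of_tendsto (u := fun k => (1 + ε k) • x) ?_ (fun k => ?_)
      (continuousAt_blockSoftThresholdJacobian γ hx₀)
    · simpa using (hε₀.const_add 1).smul_const x
    · refine hasFDerivAt_blockSoftThreshold hγ.le ?_
      rw [hnorm (by linarith [hε k])]
      nlinarith [hε k]
  · refine mem_Bsubdiff_of_tendsto (D := fun _ => 0) (u := fun k => (1 - ε k) • x) ?_ (fun k => ?_)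
      continuousAt_const
    · simpa using (hε₀.const_sub 1).smul_const x
    · refine hasFDerivAt_blockSoftThreshold_of_norm_lt ?_
      rw [hnorm (by linarith [hε k])]
      nlinarith [hε k]

end BsubdiffBlockSoftThreshold

/-- For `g = ‖·‖₂`: the proximal mapping is `(1 - γ/‖x‖)x` if `‖x‖ ≥ γ` and `0` otherwise,
and its B-subdifferential is `{I - (γ/‖x‖)(I - ww')}` (with `w = x/‖x‖`) when `‖x‖ > γ`,
`{0}` when `‖x‖ < γ`, and the pair of both matrices when `‖x‖ = γ`. -/
theorem prox_euclidean_norm {n : ℕ} (γ : ℝ) (p : Eucl n → Eucl n)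
    (hγ : 0 < γ)
    (hp : IsProx γ (fun x : Eucl n => ((‖x‖ : ℝ) : EReal)) p) :
    (∀ x : Eucl n, p x = if γ ≤ ‖x‖ then (1 - γ / ‖x‖) • x else 0) ∧
    (∀ x : Eucl n,
      (γ < ‖x‖ → Bsubdiff p x =
        {(1 : Eucl n →L[ℝ] Eucl n) - (γ / ‖x‖) • ((1 : Eucl n →L[ℝ] Eucl n) - outerProd (‖x‖⁻¹ • x))}) ∧
      (‖x‖ < γ → Bsubdiff p x = {0}) ∧
      (‖x‖ = γ → Bsubdiff p x =
        {(1 : Eucl n →L[ℝ] Eucl n) - (γ / ‖x‖) • ((1 : Eucl n →L[ℝ] Eucl n) - outerProd (‖x‖⁻¹ • x)), 0})) := by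
  obtain rfl := hp.eq_blockSoftThreshold hγ
  exact ⟨fun x => rfl, fun x => ⟨Bsubdiff_blockSoftThreshold_of_lt_norm hγ.le,
    Bsubdiff_blockSoftThreshold_of_norm_lt, Bsubdiff_blockSoftThreshold_of_norm_eq hγ⟩⟩
end
end
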